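/- arXiv:2307.09603 — 6 statements merged into one kernel-verified Lean document; each statement's English description precedes it below -/
import Mathlib

section
/- Let 1 ≤ k ≤ n and let u ∈ ℝ^n be nonzero. There exists a totally positive k×n matrix A with Au = 0 (equivalently, the hyperplane H_u = {[v] ∈ ℝP^{n−1} : u·v = 0} contains a totally positive subspace of projective dimension k−1) if and only if var(u) ≥ k. -/
/-!
If `A` is totally positive, `A u = 0` and `u ≠ 0` has fewer than `k` sign changes, then either
the support of `u` lies in a set of `k` columns of `A`, which are independent, or it splits into
`k` consecutive blocks on which `u` has constant sign. In the second case the `k` columns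
`∑_{j ∈ block} u_j A_j` sum to `A u = 0`, but by multilinearity their determinant is a sum of
maximal minors of `A`, all weighted with the same sign, so it does not vanish.

Conversely, if `u` has `k` sign changes, pick alternating entries `u_{q_0}, …, u_{q_k}`. The sum
`g(x) = ∑_j sign(u_j) exp(-n (j - x)^2)` of Gaussian bumps has the sign of `u_j` at each `j` in
the support, hence zeros `α_1 < … < α_k`, and with suitable positive weights `d_j` the matrix
`d_j exp(2 n j α_i)` annihilates `u`. It is totally positive because the generalized
Vandermonde determinants `det (exp (a_i b_j))` with increasing `a` and `b` never vanish (by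
Rolle's theorem) and deform continuously into ordinary Vandermonde determinants.
-/

open Matrix

/-- The minor of a real `k × n` matrix on a set `S` of `k` columns. -/
noncomputable def minorCols {k n : ℕ} (A : Matrix (Fin k) (Fin n) ℝ)
    (S : Finset (Fin n)) (hS : S.card = k) : ℝ :=
  (A.submatrix id (fun i => ((S.orderIsoOfFin hS) i : Fin n))).det

/-- The minor of a real `n × k` matrix on a set `S` of `k` rows. -/
noncomputable def minorRows {k n : ℕ} (B : Matrix (Fin n) (Fin k) ℝ)
    (S : Finset (Fin n)) (hS : S.card = k) : ℝ :=
  (B.submatrix (fun i => ((S.orderIsoOfFin hS) i : Fin n)) id).det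

/-- A real `k × n` matrix is totally nonnegative if all its maximal (`k × k`) minors
are nonnegative. -/
def IsTotallyNonneg {k n : ℕ} (A : Matrix (Fin k) (Fin n) ℝ) : Prop :=
  ∀ (S : Finset (Fin n)) (hS : S.card = k), 0 ≤ minorCols A S hS

/-- A real `k × n` matrix is totally positive if all its maximal (`k × k`) minors
are strictly positive. -/
def IsTotallyPos {k n : ℕ} (A : Matrix (Fin k) (Fin n) ℝ) : Prop :=
  ∀ (S : Finset (Fin n)) (hS : S.card = k), 0 < minorCols A S hS

/-- `var v`: the number of sign changes in the sequence `v 0, …, v (n-1)` after the zero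
entries are deleted. -/
noncomputable def signVar {n : ℕ} (v : Fin n → ℝ) : ℕ :=
  let l := (List.ofFn v).filter (fun x => x ≠ 0)
  (l.zipWith (· * ·) l.tail).countP (fun x => x < 0)

/-- `v̄ar v`: the maximum of `var w` over all `w` agreeing with `v` in the nonzero entries
of `v`, i.e. the maximal number of sign changes after choosing a sign for each zero entry. -/
noncomputable def signVarBar {n : ℕ} (v : Fin n → ℝ) : ℕ :=
  sSup {m | ∃ w : Fin n → ℝ, (∀ i, v i ≠ 0 → w i = v i) ∧ m = signVar w}

section OrderedRing

variable {R : Type*} [CommRing R] [LinearOrder R] [IsStrictOrderedRing R] {x y z : R}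

lemma mul_pos_of_mul_pos_of_mul_pos (hxy : 0 < x * y) (hyz : 0 < y * z) : 0 < x * z :=
  pos_of_mul_pos_right (a := y * y)
    (by linarith [mul_pos hxy hyz, show x * y * (y * z) = y * y * (x * z) by ring])
    (mul_self_nonneg y)

lemma mul_neg_of_mul_pos_of_mul_neg (hxy : 0 < x * y) (hyz : y * z < 0) : x * z < 0 :=
  neg_of_mul_neg_right (a := y * y)
    (by linarith [mul_neg_of_pos_of_neg hxy hyz, show x * y * (y * z) = y * y * (x * z) by ring])
    (mul_self_nonneg y)

end OrderedRing

section SignChanges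

variable {α : Type*} (v : α → ℝ)

noncomputable def signChanges (l : List α) : ℕ :=
  (l.zipWith (fun i j => v i * v j) l.tail).countP (· < 0)

lemma signChanges_cons_cons (a b : α) (l : List α) :
    signChanges v (a :: b :: l) = signChanges v (b :: l) + if v a * v b < 0 then 1 else 0 := by
  simp only [signChanges, List.zipWith, List.tail, List.countP_cons, decide_eq_true_eq]

lemma signChanges_lt_length {l : List α} (hl : l ≠ []) : signChanges v l < l.length := by
  calc signChanges v l ≤ (l.zipWith (fun i j => v i * v j) l.tail).length := List.countP_le_length
    _ < l.length := by
      rw [List.length_zipWith, List.length_tail]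
      have := List.length_pos_iff.2 hl
      omega

variable {v}

lemma exists_alternating_sublist :
    ∀ l : List α, l ≠ [] → (∀ j ∈ l, v j ≠ 0) →
      ∃ l' : List α, l'.Sublist l ∧ l'.length = signChanges v l + 1 ∧
        l'.IsChain (fun i j => v i * v j < 0) ∧ l'.head? = l.head?
  | [], hl, _ => absurd rfl hl
  | [a], _, _ => ⟨[a], List.Sublist.refl _, rfl, List.isChain_singleton _, rfl⟩
  | a :: b :: l, _, hv => by
    obtain ⟨_ | ⟨c, l'⟩, hsub, hlen, hchain, hhead⟩ :=
      exists_alternating_sublist (b :: l) (List.cons_ne_nil _ _)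
        (fun j hj => hv j (List.mem_cons_of_mem a hj))
    · simp at hlen
    obtain rfl : c = b := by simpa using hhead
    rw [signChanges_cons_cons]
    by_cases hab : v a * v c < 0
    · refine ⟨a :: c :: l', hsub.cons_cons a, by simp [hab, hlen], ?_, rfl⟩
      exact List.isChain_cons_cons.2 ⟨hab, hchain⟩
    · refine ⟨a :: l', ((List.sublist_cons_self c l').trans hsub).cons_cons a,
        by simp [hab, ← hlen], ?_, rfl⟩
      have hac : 0 < v a * v c := lt_of_le_of_ne (not_lt.1 hab)
        (mul_ne_zero (hv a (by simp)) (hv c (by simp))).symm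
      rcases l' with _ | ⟨d, l'⟩
      · exact List.isChain_singleton _
      · obtain ⟨hcd, hchain⟩ := List.isChain_cons_cons.1 hchain
        exact List.isChain_cons_cons.2 ⟨mul_neg_of_mul_pos_of_mul_neg hac hcd, hchain⟩

lemma exists_signConstant_blocks :
    ∀ (l : List α) (k : ℕ), (∀ j ∈ l, v j ≠ 0) → signChanges v l < k → k ≤ l.length →
      ∃ L : List (List α), L.length = k ∧ L.flatten = l ∧
        ∀ b ∈ L, b ≠ [] ∧ ∀ i ∈ b, ∀ j ∈ b, 0 < v i * v j
  | [], k, _, hsc, hk => by simp at hsc hk; omega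
  | [a], k, hv, hsc, hk => by
    obtain rfl : k = 1 := by simp at hsc hk; omega
    refine ⟨[[a]], rfl, rfl, ?_⟩
    simpa using mul_self_pos.2 (hv a (by simp))
  | a :: b :: l, k, hv, hsc, hk => by
    have hv' : ∀ j ∈ b :: l, v j ≠ 0 := fun j hj => hv j (List.mem_cons_of_mem a hj)
    rw [signChanges_cons_cons] at hsc
    by_cases hsplit : 2 ≤ k ∧ signChanges v (b :: l) < k - 1
    · obtain ⟨L, hlen, hflat, hblocks⟩ := exists_signConstant_blocks (b :: l) (k - 1) hv'
        hsplit.2 (by simp at hk ⊢; omega)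
      refine ⟨[a] :: L, by simp; omega, by simp [hflat], ?_⟩
      rw [List.forall_mem_cons]
      exact ⟨⟨List.cons_ne_nil _ _, by simpa using mul_self_pos.2 (hv a (by simp))⟩, hblocks⟩
    have hab : 0 < v a * v b := by
      refine lt_of_le_of_ne (not_lt.1 fun hab => hsplit ?_)
        (mul_ne_zero (hv a (by simp)) (hv b (by simp))).symm
      simp only [hab, if_true] at hsc
      omega
    simp only [not_lt.2 hab.le, if_false, add_zero] at hsc
    have hk' : k ≤ (b :: l).length := by
      have := signChanges_lt_length v (List.cons_ne_nil b l)
      omega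
    obtain ⟨_ | ⟨_ | ⟨c, r⟩, L⟩, hlen, hflat, hblocks⟩ :=
      exists_signConstant_blocks (b :: l) k hv' hsc hk'
    · simp at hlen; omega
    · exact absurd rfl (hblocks [] (by simp)).1
    obtain ⟨rfl, hrest⟩ : c = b ∧ r ++ L.flatten = l := by simpa using hflat
    refine ⟨(a :: c :: r) :: L, by simpa using hlen, by simp [hrest], ?_⟩
    rw [List.forall_mem_cons] at hblocks ⊢
    refine ⟨⟨List.cons_ne_nil _ _, ?_⟩, hblocks.2⟩
    have hc : ∀ i ∈ a :: c :: r, 0 < v c * v i := by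
      rw [List.forall_mem_cons]
      exact ⟨mul_comm (v a) (v c) ▸ hab, hblocks.1.2 c (by simp)⟩
    intro i hi j hj
    exact mul_pos_of_mul_pos_of_mul_pos (mul_comm (v c) (v i) ▸ hc i hi) (hc j hj)

end SignChanges

section Support

variable {n : ℕ}

noncomputable def supportList (u : Fin n → ℝ) : List (Fin n) := (List.finRange n).filter (u · ≠ 0)

lemma mem_supportList {u : Fin n → ℝ} {j : Fin n} : j ∈ supportList u ↔ u j ≠ 0 := by
  simp [supportList]

lemma pairwise_lt_supportList (u : Fin n → ℝ) : (supportList u).Pairwise (· < ·) :=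
  (List.pairwise_lt_finRange n).filter _

lemma signVar_eq_signChanges_supportList (u : Fin n → ℝ) :
    signVar u = signChanges u (supportList u) := by
  simp only [signVar, signChanges, supportList, List.ofFn_eq_map, List.filter_map, ← List.map_tail,
    List.zipWith_map]
  rfl

variable {u : Fin n → ℝ}

lemma exists_strictMono_alternating {k : ℕ} (hu : u ≠ 0) (hk : k ≤ signVar u) :
    ∃ q : Fin (k + 1) → Fin n, StrictMono q ∧ (∀ t, u (q t) ≠ 0) ∧
      ∀ t : Fin k, u (q t.castSucc) * u (q t.succ) < 0 := by
  obtain ⟨j, hj⟩ := Function.ne_iff.1 hu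
  obtain ⟨l, hsub, hlen, hchain, -⟩ := exists_alternating_sublist (v := u) (supportList u)
    (List.ne_nil_of_mem (mem_supportList.2 hj)) (fun j hj => mem_supportList.1 hj)
  rw [← signVar_eq_signChanges_supportList] at hlen
  have hlen' : k + 1 ≤ l.length := by omega
  have hpw := (pairwise_lt_supportList u).sublist hsub
  refine ⟨fun t => l[t.1], fun t t' h => List.pairwise_iff_getElem.1 hpw _ _ _ _ h,
    fun t => mem_supportList.1 (hsub.subset (List.getElem_mem _)), fun t => ?_⟩
  exact List.isChain_iff_getElem.1 hchain t (by omega)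

lemma exists_ordered_signConstant_blocks {k : ℕ} (hk : signVar u < k)
    (hsupp : k ≤ (supportList u).length) :
    ∃ S : Fin k → Finset (Fin n), (∀ s s', s < s' → ∀ i ∈ S s, ∀ j ∈ S s', i < j) ∧
      (∀ s, (S s).Nonempty) ∧ (∀ s, ∀ i ∈ S s, ∀ j ∈ S s, 0 < u i * u j) ∧
      ∀ j, u j ≠ 0 → ∃ s, j ∈ S s := by
  rw [signVar_eq_signChanges_supportList] at hk
  obtain ⟨L, hlen, hflat, hblocks⟩ := exists_signConstant_blocks (v := u) (supportList u) k
    (fun j hj => mem_supportList.1 hj) hk hsupp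
  have hblocks' (s : Fin k) := hblocks L[s.1] (List.getElem_mem _)
  have hpw := (List.pairwise_flatten.1 (hflat ▸ pairwise_lt_supportList u)).2
  refine ⟨fun s => L[s.1].toFinset, fun s s' h i hi j hj => ?_, fun s => ?_, fun s i hi j hj => ?_,
    fun j hj => ?_⟩
  · exact List.pairwise_iff_getElem.1 hpw _ _ _ _ h i (List.mem_toFinset.1 hi) j
      (List.mem_toFinset.1 hj)
  · exact List.toFinset_nonempty_iff _ |>.2 (hblocks' s).1
  · exact (hblocks' s).2 i (List.mem_toFinset.1 hi) j (List.mem_toFinset.1 hj)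
  · obtain ⟨b, hb, hjb⟩ := List.mem_flatten.1 (hflat ▸ mem_supportList.2 hj)
    obtain ⟨s, hs, rfl⟩ := List.getElem_of_mem hb
    exact ⟨⟨s, hlen ▸ hs⟩, List.mem_toFinset.2 hjb⟩

end Support

section ExpVandermonde

open Set Real

lemma strictMono_of_mem_Ioo {k : ℕ} {b : Fin (k + 1) → ℝ} (hb : Monotone b) {y : Fin k → ℝ}
    (hy : ∀ t, y t ∈ Ioo (b t.castSucc) (b t.succ)) : StrictMono y := fun t t' h =>
  calc y t < b t.succ := (hy t).2
    _ ≤ b t'.castSucc := hb (Fin.succ_le_castSucc_iff.2 h)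
    _ < y t' := (hy t').1

lemma exists_strictMono_deriv_eq_zero {f f' : ℝ → ℝ} (hf : ∀ x, HasDerivAt f (f' x) x) {k : ℕ}
    {b : Fin (k + 1) → ℝ} (hb : StrictMono b) (hfb : ∀ t, f (b t) = 0) :
    ∃ y : Fin k → ℝ, StrictMono y ∧ ∀ t, f' (y t) = 0 := by
  have (t : Fin k) : ∃ y ∈ Ioo (b t.castSucc) (b t.succ), f' y = 0 :=
    exists_hasDerivAt_eq_zero (hb t.castSucc_lt_succ)
      (fun x _ => (hf x).continuousAt.continuousWithinAt) (by rw [hfb, hfb]) (fun x _ => hf x)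
  choose y hy hy0 using this
  exact ⟨y, strictMono_of_mem_Ioo hb.monotone hy, hy0⟩

lemma exists_strictMono_eq_zero_of_alternating {g : ℝ → ℝ} (hg : Continuous g) {k : ℕ}
    {b : Fin (k + 1) → ℝ} (hb : StrictMono b)
    (halt : ∀ t : Fin k, g (b t.castSucc) * g (b t.succ) < 0) :
    ∃ y : Fin k → ℝ, StrictMono y ∧ ∀ t, g (y t) = 0 := by
  have (t : Fin k) : ∃ y ∈ Ioo (b t.castSucc) (b t.succ), g y = 0 := by
    have hlt := (hb t.castSucc_lt_succ).le
    rcases mul_neg_iff.1 (halt t) with ⟨h₁, h₂⟩ | ⟨h₁, h₂⟩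
    · exact intermediate_value_Ioo' hlt hg.continuousOn ⟨h₂, h₁⟩
    · exact intermediate_value_Ioo hlt hg.continuousOn ⟨h₁, h₂⟩
  choose y hy hy0 using this
  exact ⟨y, strictMono_of_mem_Ioo hb.monotone hy, hy0⟩

theorem eq_zero_of_sum_mul_exp_eq_zero :
    ∀ {k : ℕ} {a b c : Fin k → ℝ}, Function.Injective a → StrictMono b →
      (∀ t, ∑ i, c i * exp (a i * b t) = 0) → c = 0
  | 0, _, _, _, _, _, _ => Subsingleton.elim _ _
  | k + 1, a, b, c, ha, hb, hc => by
    -- Divide by `exp (a 0 * x)` and apply Rolle's theorem.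
    let g x := ∑ i, c i * exp ((a i - a 0) * x)
    have hg (x : ℝ) : g x = exp (-(a 0 * x)) * ∑ i, c i * exp (a i * x) := by
      simp only [g, Finset.mul_sum, mul_left_comm _ (c _), ← exp_add]
      exact Finset.sum_congr rfl fun i _ => by ring_nf
    have hg' (x : ℝ) : HasDerivAt g (∑ i, c i * (exp ((a i - a 0) * x) * ((a i - a 0) * 1))) x :=
      HasDerivAt.fun_sum fun i _ => (((hasDerivAt_id x).const_mul _).exp).const_mul (c i)
    obtain ⟨y, hy, hy0⟩ := exists_strictMono_deriv_eq_zero hg' hb (fun t => by simp [hg, hc])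
    have hsucc : (fun i : Fin k => c i.succ * (a i.succ - a 0)) = 0 := by
      refine eq_zero_of_sum_mul_exp_eq_zero (a := fun i : Fin k => a i.succ - a 0) (b := y)
        (fun i j h => Fin.succ_injective _ (ha (sub_left_injective h))) hy fun t => ?_
      simpa [Fin.sum_univ_succ, mul_comm, mul_assoc, mul_left_comm] using hy0 t
    have hcs (i : Fin k) : c i.succ = 0 := by
      simpa [sub_eq_zero, ha.eq_iff, Fin.succ_ne_zero] using congrFun hsucc i
    have hc0 : c 0 = 0 := by simpa [Fin.sum_univ_succ, hcs] using hc 0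
    funext i
    exact Fin.cases hc0 hcs i

lemma det_exp_mul_ne_zero {k : ℕ} {a b : Fin k → ℝ} (ha : Function.Injective a)
    (hb : StrictMono b) : (of fun i t => exp (a i * b t)).det ≠ 0 := fun h => by
  obtain ⟨c, hc, hcM⟩ := exists_vecMul_eq_zero_iff.2 h
  exact hc (eq_zero_of_sum_mul_exp_eq_zero ha hb fun t => by
    simpa [vecMul, dotProduct] using congrFun hcM t)

lemma det_vandermonde_pos {k : ℕ} {v : Fin k → ℝ} (hv : StrictMono v) :
    0 < (vandermonde v).det := by
  rw [det_vandermonde]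
  exact Finset.prod_pos fun i _ => Finset.prod_pos fun j hj => sub_pos.2 (hv (Finset.mem_Ioi.1 hj))

theorem det_exp_mul_pos {k : ℕ} {a b : Fin k → ℝ} (ha : StrictMono a) (hb : StrictMono b) :
    0 < (of fun i t => exp (a i * b t)).det := by
  -- The determinant does not vanish along the deformation of the rates `a` to `0, 1, …, k - 1`,
  -- where it is a Vandermonde determinant.
  let e (s : ℝ) (i : Fin k) : ℝ := (1 - s) * a i + s * i
  let D (s : ℝ) : ℝ := (of fun i t => exp (e s i * b t)).det
  have he (s : ℝ) (hs : s ∈ Icc 0 1) : StrictMono (e s) := fun i j h => by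
    have hai := ha h
    have hij : (i : ℝ) < j := by exact_mod_cast h
    simp only [e]
    rcases hs.2.lt_or_eq with hs1 | rfl
    · nlinarith [mul_pos (sub_pos.2 hs1) (sub_pos.2 hai), mul_nonneg hs.1 (sub_pos.2 hij).le]
    · linarith
  have hD : Continuous D := by
    refine Continuous.matrix_det (continuous_matrix fun i t => ?_)
    fun_prop
  have hD1 : 0 < D 1 := by
    have : (of fun i t => exp (e 1 i * b t)) = (vandermonde (exp ∘ b))ᵀ := by
      ext i t
      simp [e, vandermonde_apply, ← exp_nat_mul]
    simpa [D, this] using det_vandermonde_pos (exp_strictMono.comp hb)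
  by_contra! h
  obtain ⟨s, hs, hDs⟩ := intermediate_value_Icc zero_le_one hD.continuousOn
    (⟨by simpa [D, e] using h, hD1.le⟩ : (0 : ℝ) ∈ Icc (D 0) (D 1))
  exact det_exp_mul_ne_zero (he s hs).injective hb hDs

end ExpVandermonde

section TotallyPositive

variable {k n : ℕ}

lemma det_of_sum_mul_cols {R : Type*} [CommRing R] (A : Matrix (Fin k) (Fin n) R)
    (S : Fin k → Finset (Fin n)) (w : Fin n → R) :
    (of fun i s => ∑ j ∈ S s, w j * A i j).det =
      ∑ p ∈ Fintype.piFinset S, (∏ s, w (p s)) * (A.submatrix id p).det := by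
  rw [← det_transpose]
  have hrows : (of fun i s => ∑ j ∈ S s, w j * A i j)ᵀ = fun s => ∑ j ∈ S s, w j • Aᵀ j := by
    ext s i
    simp [Finset.sum_apply]
  rw [hrows]
  change detRowAlternating.toMultilinearMap _ = _
  rw [MultilinearMap.map_sum_finset]
  refine Finset.sum_congr rfl fun p _ => ?_
  rw [MultilinearMap.map_smul_univ, smul_eq_mul, ← det_transpose (A.submatrix id p)]
  rfl

lemma isTotallyPos_iff_det_submatrix_pos {A : Matrix (Fin k) (Fin n) ℝ} :
    IsTotallyPos A ↔ ∀ p : Fin k → Fin n, StrictMono p → 0 < (A.submatrix id p).det := by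
  refine ⟨fun hA p hp => ?_, fun h S hS => h _ (S.orderEmbOfFin hS).strictMono⟩
  have hcard : (Finset.univ.image p).card = k := by
    rw [Finset.card_image_of_injective _ hp.injective, Finset.card_univ, Fintype.card_fin]
  have hp' : p = _ := Finset.orderEmbOfFin_unique hcard
    (fun x => Finset.mem_image_of_mem p (Finset.mem_univ x)) hp
  rw [hp']
  exact hA _ hcard

variable {A : Matrix (Fin k) (Fin n) ℝ} {u : Fin n → ℝ}

lemma IsTotallyPos.mulVec_ne_zero_of_support_subset (hA : IsTotallyPos A) (hu : u ≠ 0)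
    {T : Finset (Fin n)} (hT : T.card = k) (hsupp : ∀ j, u j ≠ 0 → j ∈ T) : A *ᵥ u ≠ 0 := by
  set σ := T.orderEmbOfFin hT
  have hσ : A.submatrix id σ *ᵥ (u ∘ σ) = A *ᵥ u := by
    ext i
    simp only [mulVec, dotProduct, submatrix_apply, id, Function.comp_apply]
    calc ∑ t, A i (σ t) * u (σ t) = ∑ j ∈ T, A i j * u j := by
          rw [← Finset.map_orderEmbOfFin_univ T hT, Finset.sum_map]
          rfl
      _ = ∑ j, A i j * u j := Finset.sum_subset (Finset.subset_univ T) fun j _ hj => by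
          rw [not_imp_comm.1 (hsupp j) hj, mul_zero]
  have hker : u ∘ σ ≠ 0 := by
    obtain ⟨j, hj⟩ := Function.ne_iff.1 hu
    obtain ⟨t, rfl⟩ : j ∈ Set.range σ := by
      rw [Finset.range_orderEmbOfFin]
      exact hsupp j hj
    exact Function.ne_iff.2 ⟨t, hj⟩
  intro hAu
  exact (isTotallyPos_iff_det_submatrix_pos.1 hA σ σ.strictMono).ne'
    (exists_mulVec_eq_zero_iff.1 ⟨u ∘ σ, hker, hσ.trans hAu⟩)

lemma IsTotallyPos.mulVec_ne_zero_of_blocks (hA : IsTotallyPos A) (hu : u ≠ 0)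
    (S : Fin k → Finset (Fin n)) (hord : ∀ s s', s < s' → ∀ i ∈ S s, ∀ j ∈ S s', i < j)
    (hne : ∀ s, (S s).Nonempty) (hsign : ∀ s, ∀ i ∈ S s, ∀ j ∈ S s, 0 < u i * u j)
    (hcover : ∀ j, u j ≠ 0 → ∃ s, j ∈ S s) : A *ᵥ u ≠ 0 := by
  intro hAu
  obtain ⟨j, hj⟩ := Function.ne_iff.1 hu
  obtain ⟨s₀, -⟩ := hcover j hj
  let M : Matrix (Fin k) (Fin k) ℝ := of fun i s => ∑ j ∈ S s, u j * A i j
  have hdisj : ((Finset.univ : Finset (Fin k)) : Set (Fin k)).PairwiseDisjoint S :=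
    fun s _ s' _ hss' => Finset.disjoint_left.2 fun j hj hj' => by
      rcases hss'.lt_or_gt with h | h
      · exact lt_irrefl j (hord _ _ h j hj j hj')
      · exact lt_irrefl j (hord _ _ h j hj' j hj)
  have hcols : M *ᵥ (fun _ => 1) = A *ᵥ u := by
    ext i
    simp only [M, mulVec, dotProduct, of_apply, mul_one]
    rw [← Finset.sum_biUnion hdisj]
    refine (Finset.sum_subset (Finset.subset_univ _) fun j _ hj => ?_).trans
      (Finset.sum_congr rfl fun j _ => mul_comm _ _)
    have : u j = 0 := by
      by_contra hj'
      obtain ⟨s, hs⟩ := hcover j hj'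
      exact hj (Finset.mem_biUnion.2 ⟨s, Finset.mem_univ _, hs⟩)
    rw [this, zero_mul]
  have hdet : M.det = 0 := exists_mulVec_eq_zero_iff.1
    ⟨_, fun h => one_ne_zero (congrFun h s₀), hcols.trans hAu⟩
  let F (p : Fin k → Fin n) : ℝ := (∏ s, u (p s)) * (A.submatrix id p).det
  have hpick {p} (hp : p ∈ Fintype.piFinset S) : 0 < (A.submatrix id p).det :=
    isTotallyPos_iff_det_submatrix_pos.1 hA p fun s s' h =>
      hord s s' h _ (Fintype.mem_piFinset.1 hp s) _ (Fintype.mem_piFinset.1 hp s')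
  choose p₀ hp₀ using hne
  have hp₀' : p₀ ∈ Fintype.piFinset S := Fintype.mem_piFinset.2 hp₀
  have hterm {p} (hp : p ∈ Fintype.piFinset S) : 0 < F p * F p₀ := by
    have hprod : 0 < ∏ s, u (p s) * u (p₀ s) :=
      Finset.prod_pos fun s _ => hsign s _ (Fintype.mem_piFinset.1 hp s) _ (hp₀ s)
    calc 0 < (∏ s, u (p s) * u (p₀ s)) * ((A.submatrix id p).det * (A.submatrix id p₀).det) :=
          mul_pos hprod (mul_pos (hpick hp) (hpick hp₀'))
      _ = F p * F p₀ := by simp only [F, Finset.prod_mul_distrib]; ring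
  have := Finset.sum_pos (fun p hp => hterm hp) ⟨p₀, hp₀'⟩
  rw [← Finset.sum_mul, ← det_of_sum_mul_cols, hdet, zero_mul] at this
  exact lt_irrefl 0 this

end TotallyPositive

theorem IsTotallyPos.le_signVar {k n : ℕ} {A : Matrix (Fin k) (Fin n) ℝ} {u : Fin n → ℝ}
    (hA : IsTotallyPos A) (hkn : k ≤ n) (hu : u ≠ 0) (hAu : A *ᵥ u = 0) : k ≤ signVar u := by
  by_contra! hvar
  rcases le_or_gt (supportList u).length k with hlen | hlen
  · obtain ⟨T, hsub, -, hT⟩ := Finset.exists_subsuperset_card_eq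
      (Finset.subset_univ (supportList u).toFinset) ((List.toFinset_card_le _).trans hlen)
      (by simpa using hkn)
    exact hA.mulVec_ne_zero_of_support_subset hu hT
      (fun j hj => hsub (List.mem_toFinset.2 (mem_supportList.2 hj))) hAu
  · obtain ⟨S, hord, hne, hsign, hcover⟩ := exists_ordered_signConstant_blocks hvar hlen.le
    exact hA.mulVec_ne_zero_of_blocks hu S hord hne hsign hcover hAu

section Construction

open Real

lemma mul_sum_gaussian_pos {n : ℕ} {C : ℝ} (hC : (n : ℝ) < exp C) {s : Fin n → ℝ}
    (hs : ∀ j, |s j| ≤ 1) {j₀ : Fin n} (hj₀ : |s j₀| = 1) :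
    0 < s j₀ * ∑ j, s j * exp (-C * ((j : ℝ) - j₀) ^ 2) := by
  have hCpos : 0 < C := by
    have : (1 : ℝ) ≤ n := by exact_mod_cast j₀.pos
    exact one_lt_exp_iff.1 (by linarith)
  have hfar (j : Fin n) (hj : j ≠ j₀) : exp (-C * ((j : ℝ) - j₀) ^ 2) ≤ exp (-C) := by
    have hsq : 1 ≤ ((j : ℝ) - j₀) ^ 2 := by
      rcases Fin.lt_or_lt_of_ne hj with h | h
      · have : (j : ℝ) + 1 ≤ j₀ := by exact_mod_cast h
        nlinarith
      · have : (j₀ : ℝ) + 1 ≤ j := by exact_mod_cast h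
        nlinarith
    exact exp_le_exp.2 (by nlinarith)
  have hcard : ((Finset.univ.erase j₀).card : ℝ) ≤ n := by
    exact_mod_cast Finset.card_erase_le.trans_eq (Finset.card_fin n)
  have hsj₀ : s j₀ * s j₀ = 1 := by rw [← abs_mul_abs_self, hj₀, one_mul]
  calc 0 < 1 - n * exp (-C) := by
        rw [sub_pos, exp_neg, ← div_eq_mul_inv, div_lt_one (exp_pos C)]
        exact hC
    _ ≤ 1 - ∑ j ∈ Finset.univ.erase j₀, exp (-C) := by
        rw [Finset.sum_const, nsmul_eq_mul]
        gcongr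
    _ ≤ s j₀ * s j₀ +
          ∑ j ∈ Finset.univ.erase j₀, s j₀ * (s j * exp (-C * ((j : ℝ) - j₀) ^ 2)) := by
        rw [hsj₀, sub_eq_add_neg, ← Finset.sum_neg_distrib]
        gcongr with j hj
        refine neg_le_of_abs_le ?_
        calc |s j₀ * (s j * exp (-C * ((j : ℝ) - j₀) ^ 2))|
            = |s j| * exp (-C * ((j : ℝ) - j₀) ^ 2) := by
              rw [abs_mul, abs_mul, hj₀, one_mul, abs_of_pos (exp_pos _)]
          _ ≤ 1 * exp (-C) :=
              mul_le_mul (hs j) (hfar j (Finset.ne_of_mem_erase hj)) (exp_pos _).le zero_le_one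
          _ = exp (-C) := one_mul _
    _ = s j₀ * ∑ j, s j * exp (-C * ((j : ℝ) - j₀) ^ 2) := by
        rw [Finset.mul_sum, ← Finset.add_sum_erase _ _ (Finset.mem_univ j₀)]
        simp

lemma isTotallyPos_of_exp_mul {k n : ℕ} {a : Fin k → ℝ} {b d : Fin n → ℝ} (ha : StrictMono a)
    (hb : StrictMono b) (hd : ∀ j, 0 < d j) :
    IsTotallyPos (of fun i j => d j * exp (a i * b j)) := by
  refine isTotallyPos_iff_det_submatrix_pos.2 fun p hp => ?_
  change 0 < (of fun i t => d (p t) * (of fun i t => exp (a i * b (p t))) i t).det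
  rw [det_mul_row]
  exact mul_pos (Finset.prod_pos fun t _ => hd _) (det_exp_mul_pos ha (hb.comp hp))

theorem exists_isTotallyPos_mulVec_eq_zero {k n : ℕ} {u : Fin n → ℝ} (hu : u ≠ 0)
    (hk : k ≤ signVar u) : ∃ A : Matrix (Fin k) (Fin n) ℝ, IsTotallyPos A ∧ A *ᵥ u = 0 := by
  obtain ⟨q, hq, hq0, halt⟩ := exists_strictMono_alternating hu hk
  have hn : (0 : ℝ) < n := by exact_mod_cast (q 0).pos
  let s (j : Fin n) : ℝ := u j / |u j|
  have hs (j : Fin n) : |s j| ≤ 1 := by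
    rw [abs_div, abs_abs]
    exact div_self_le_one _
  have hs_q (t : Fin (k + 1)) : |s (q t)| = 1 := by
    rw [abs_div, abs_abs, div_self (abs_ne_zero.2 (hq0 t))]
  let g (x : ℝ) : ℝ := ∑ j, s j * exp (-n * ((j : ℝ) - x) ^ 2)
  have hg : Continuous g := by fun_prop
  have hgq (t : Fin (k + 1)) : 0 < s (q t) * g (q t) :=
    mul_sum_gaussian_pos (by linarith [add_one_le_exp (n : ℝ)]) hs (hs_q t)
  have hgalt (t : Fin k) : g (q t.castSucc) * g (q t.succ) < 0 := by
    have hss : s (q t.castSucc) * s (q t.succ) ≤ 0 := by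
      rw [div_mul_div_comm]
      exact div_nonpos_of_nonpos_of_nonneg (halt t).le (by positivity)
    refine neg_of_mul_pos_right ?_ hss
    linarith [mul_pos (hgq t.castSucc) (hgq t.succ)]
  obtain ⟨α, hα, hαg⟩ := exists_strictMono_eq_zero_of_alternating hg
    (fun t t' h => Nat.cast_lt.2 (hq h)) hgalt
  -- chosen so that `(A u) i = exp (n * α i ^ 2) * g (α i)`
  let d (j : Fin n) : ℝ := if u j = 0 then 1 else exp (-n * (j : ℝ) ^ 2) / |u j|
  have hd (j : Fin n) : 0 < d j := by
    by_cases h : u j = 0 <;> simp [d, h, abs_pos, exp_pos]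
  have hdu (j : Fin n) : d j * u j = s j * exp (-n * (j : ℝ) ^ 2) := by
    by_cases h : u j = 0
    · simp [d, s, h]
    · simp only [d, s, h, if_false]
      ring
  refine ⟨of fun i j => d j * exp (α i * (2 * n * j)), isTotallyPos_of_exp_mul hα
    (fun j j' h => mul_lt_mul_of_pos_left (Nat.cast_lt.2 h) (by linarith)) hd, ?_⟩
  ext i
  calc ((of fun i j => d j * exp (α i * (2 * n * j))) *ᵥ u) i
      = ∑ j, d j * u j * exp (α i * (2 * n * j)) := by
        simp only [mulVec, dotProduct, of_apply]
        exact Finset.sum_congr rfl fun j _ => by ring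
    _ = exp (n * α i ^ 2) * g (α i) := by
        rw [Finset.mul_sum]
        refine Finset.sum_congr rfl fun j _ => ?_
        rw [hdu, mul_assoc, ← exp_add, mul_left_comm (exp _), ← exp_add]
        congr 2
        ring
    _ = 0 := by rw [hαg, mul_zero]

end Construction

theorem stmt4_general (k n : ℕ) (hkn : k ≤ n) (u : Fin n → ℝ) (hu : u ≠ 0) :
    (∃ A : Matrix (Fin k) (Fin n) ℝ, IsTotallyPos A ∧ A.mulVec u = 0) ↔ k ≤ signVar u :=
  ⟨fun ⟨_, hA, hAu⟩ => hA.le_signVar hkn hu hAu, exists_isTotallyPos_mulVec_eq_zero hu⟩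

/-- For nonzero `u ∈ ℝ^n`, there is a totally positive `k × n` matrix `A`
with `A u = 0` (i.e. the hyperplane `H_u` contains a totally positive subspace of projective
dimension `k-1`) iff `var(u) ≥ k`. -/
theorem stmt4 (k n : ℕ) (hk : 1 ≤ k) (hkn : k ≤ n) (u : Fin n → ℝ) (hu : u ≠ 0) :
    (∃ A : Matrix (Fin k) (Fin n) ℝ, IsTotallyPos A ∧ A.mulVec u = 0) ↔ k ≤ signVar u :=
  stmt4_general k n hkn u hu
end

section
/- Let 1 ≤ k ≤ n−1, let H ⊂ ℝ^n be a linear hyperplane (a linear subspace of dimension n−1), and let P ⊆ H be a linear subspace of dimension n−k−1. If H contains the row span of some totally positive k×n matrix, then H contains the row span V′ of a totally positive k×n matrix with V′ ∩ P = {0}. -/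
open Matrix

/-! Choose `c₁, …, c_k ∈ H` whose images form a basis of `H ⧸ P` and perturb the rows of `B`
to `bᵢ + t • cᵢ`. In `H ⧸ P` the perturbed rows are the images of that basis under `φ + t`, where
`φ` sends the basis to the images of the `bᵢ`; so they are independent, i.e. the perturbed row
span meets `P` trivially, unless `-t` is one of the finitely many eigenvalues of `φ`. Total
positivity is an open condition, so a small nonzero `t` avoiding these eigenvalues works. -/

open Module Submodule Filter Topology Set

section

variable {K M ι : Type*} [Field K] [AddCommGroup M] [Module K M]

lemma Module.Basis.eventually_linearIndependent_add_smul [FiniteDimensional K M]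
    (e : Basis ι K M) (g : ι → M) :
    ∀ᶠ t : K in cofinite, LinearIndependent K fun i => g i + t • e i := by
  set φ : Module.End K M := e.constr K g
  have hfin : {t : K | φ.HasEigenvalue (-t)}.Finite :=
    φ.finite_hasEigenvalue.preimage neg_injective.injOn
  filter_upwards [hfin.compl_mem_cofinite] with t ht
  set ψ : Module.End K M := φ + t • LinearMap.id
  have hker : LinearMap.ker ψ = ⊥ := by
    by_contra h
    have h0 : ψ.HasEigenvalue 0 := by
      rwa [Module.End.hasEigenvalue_iff, Module.End.eigenspace_zero]
    rw [Module.End.hasEigenvalue_add_iff, zero_sub] at h0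
    exact ht h0
  have hψe : ψ ∘ e = fun i => g i + t • e i := by
    funext i
    simp [ψ, φ]
  simpa only [hψe] using e.linearIndependent.map' _ hker

lemma exists_eventually_disjoint_span_add_smul {k : ℕ} (P : Submodule K M)
    [FiniteDimensional K (M ⧸ P)] (hk : finrank K (M ⧸ P) = k) (b : Fin k → M) :
    ∃ c : Fin k → M, ∀ᶠ t : K in cofinite, Disjoint (span K (range fun i => b i + t • c i)) P := by
  let e := finBasisOfFinrankEq K (M ⧸ P) hk
  choose c hc using fun i => P.mkQ_surjective (e i)
  refine ⟨c, ?_⟩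
  filter_upwards [e.eventually_linearIndependent_add_smul (P.mkQ ∘ b)] with t ht
  simpa only [ker_mkQ] using Submodule.range_ker_disjoint (f := P.mkQ)
    (by simpa only [Function.comp_def, map_add, map_smul, hc] using ht)

lemma exists_eventually_disjoint_span_add_smul_of_le [FiniteDimensional K M] {k : ℕ}
    {H P : Submodule K M} (hPH : P ≤ H)
    (hk : finrank K P + k = finrank K H) (b : Fin k → M) (hb : ∀ i, b i ∈ H) :
    ∃ c : Fin k → M, (∀ i, c i ∈ H) ∧
      ∀ᶠ t : K in cofinite, Disjoint (span K (range fun i => b i + t • c i)) P := by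
  set P' := P.comap H.subtype
  have hk' : finrank K (H ⧸ P') = k := by
    have := P'.finrank_quotient_add_finrank
    rw [(comapSubtypeEquivOfLe hPH).finrank_eq] at this
    omega
  obtain ⟨c, hc⟩ := exists_eventually_disjoint_span_add_smul P' hk' fun i => ⟨b i, hb i⟩
  refine ⟨fun i => c i, fun i => (c i).2, ?_⟩
  filter_upwards [hc] with t ht
  have := disjoint_map H.injective_subtype ht
  rwa [map_span, map_comap_subtype, inf_eq_right.mpr hPH, ← range_comp] at this

end

lemma isOpen_setOf_isTotallyPos (k n : ℕ) :
    IsOpen {A : Matrix (Fin k) (Fin n) ℝ | IsTotallyPos A} := by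
  simp only [IsTotallyPos, ofPred_forall]
  exact isOpen_iInter_of_finite fun S => isOpen_iInter_of_finite fun _ =>
    isOpen_lt continuous_const (continuous_id.matrix_submatrix _ _).matrix_det

theorem stmt8_general (k n : ℕ) (hkn : k + 1 ≤ n)
    (H P : Submodule ℝ (Fin n → ℝ))
    (hH : Module.finrank ℝ H = n - 1) (hPH : P ≤ H)
    (hP : Module.finrank ℝ P = n - k - 1)
    (B : Matrix (Fin k) (Fin n) ℝ) (hB : IsTotallyPos B)
    (hBH : LinearMap.range B.vecMulLinear ≤ H) :
    ∃ B' : Matrix (Fin k) (Fin n) ℝ, IsTotallyPos B' ∧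
      LinearMap.range B'.vecMulLinear ≤ H ∧
      LinearMap.range B'.vecMulLinear ⊓ P = ⊥ := by
  have hBrows : ∀ i, B i ∈ H := fun i => hBH ⟨Pi.single i 1, single_one_vecMul i B⟩
  obtain ⟨c, hcH, hc⟩ :=
    exists_eventually_disjoint_span_add_smul_of_le hPH (by omega) B hBrows
  have hTP : ∀ᶠ t : ℝ in 𝓝 0, IsTotallyPos (B + t • Matrix.of c) :=
    (continuous_const.add (continuous_id.smul continuous_const)).continuousAt.preimage_mem_nhds
      ((isOpen_setOf_isTotallyPos k n).mem_nhds (by simpa using hB))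
  obtain ⟨t, htTP, htP⟩ :=
    ((hTP.filter_mono nhdsWithin_le_nhds).and (hc.filter_mono (nhdsNE_le_cofinite 0))).exists
  refine ⟨B + t • Matrix.of c, htTP, ?_, ?_⟩
  · rw [range_vecMulLinear, span_le, range_subset_iff]
    exact fun i => H.add_mem (hBrows i) (H.smul_mem t (hcH i))
  · rwa [range_vecMulLinear, ← disjoint_iff]

/-- Let `H ⊂ ℝ^n` be a linear hyperplane and `P ⊆ H` a subspace of
dimension `n-k-1`. If `H` contains the row span of a totally positive `k × n` matrix, then
it contains the row span of a totally positive `k × n` matrix meeting `P` trivially. -/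
theorem stmt8 (k n : ℕ) (hk : 1 ≤ k) (hkn : k + 1 ≤ n)
    (H P : Submodule ℝ (Fin n → ℝ))
    (hH : Module.finrank ℝ H = n - 1) (hPH : P ≤ H)
    (hP : Module.finrank ℝ P = n - k - 1)
    (B : Matrix (Fin k) (Fin n) ℝ) (hB : IsTotallyPos B)
    (hBH : LinearMap.range B.vecMulLinear ≤ H) :
    ∃ B' : Matrix (Fin k) (Fin n) ℝ, IsTotallyPos B' ∧
      LinearMap.range B'.vecMulLinear ≤ H ∧
      LinearMap.range B'.vecMulLinear ⊓ P = ⊥ :=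
  stmt8_general k n hkn H P hH hPH hP B hB hBH
end

section
/- Let k ≥ 1, n ≥ k+1, and let Z be a real n×(k+1) matrix of rank k+1 with no zero rows. Then the rational Grasstope of Z, i.e., the set of points [π(AZ)] ∈ ℝP^k as A ranges over all totally nonnegative k×n matrices of rank k with AZ of rank k, is contained in the topological closure of the open rational Grasstope of Z, i.e., of the set of points [π(BZ)] as B ranges over all totally positive k×n matrices with BZ of rank k. -/
open Matrix

/-- `π(B)`: the signed vector of maximal minors of a `k × (k+1)` matrix,
`π(B)_j = (-1)^j · det(B with column j deleted)` (`j` zero-indexed). -/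
noncomputable def piVec {k : ℕ} (B : Matrix (Fin k) (Fin (k + 1)) ℝ) : Fin (k + 1) → ℝ :=
  fun j => (-1 : ℝ) ^ (j : ℕ) * (B.submatrix id j.succAbove).det

/-- The `m = 1` Grasstope `G_{n,k,1}(Z) ⊆ ℝP^k`: the set of points `[π(A*Z)]` as `A` ranges
over totally nonnegative `k × n` matrices of rank `k` with `A * Z` of rank `k`. -/
noncomputable def grasstope1 {n k : ℕ} (Z : Matrix (Fin n) (Fin (k + 1)) ℝ) :
    Set (Projectivization ℝ (Fin (k + 1) → ℝ)) :=
  {P | ∃ (A : Matrix (Fin k) (Fin n) ℝ) (h : piVec (A * Z) ≠ 0),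
    IsTotallyNonneg A ∧ A.rank = k ∧ (A * Z).rank = k ∧
    P = Projectivization.mk ℝ (piVec (A * Z)) h}

/-- The open rational Grasstope of `Z`: the set of points `[π(A*Z)] ∈ ℝP^k` as `A` ranges
over totally positive `k × n` matrices with `A * Z` of rank `k`. -/
noncomputable def openGrasstope1 {n k : ℕ} (Z : Matrix (Fin n) (Fin (k + 1)) ℝ) :
    Set (Projectivization ℝ (Fin (k + 1) → ℝ)) :=
  {P | ∃ (A : Matrix (Fin k) (Fin n) ℝ) (h : piVec (A * Z) ≠ 0),
    IsTotallyPos A ∧ (A * Z).rank = k ∧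
    P = Projectivization.mk ℝ (piVec (A * Z)) h}

/-- The quotient topology on a projectivization. -/
noncomputable instance {K V : Type*} [DivisionRing K] [AddCommGroup V] [Module K V]
    [TopologicalSpace V] : TopologicalSpace (Projectivization K V) :=
  inferInstanceAs (TopologicalSpace (Quotient _))

/-!
Multiply a totally nonnegative `A` of rank `k` on the right by the Gaussian kernel
`G(r) = (r ^ (i - j) ^ 2)`. For `0 < r < 1` every minor of `G(r)` is, up to positive row and
column factors, a generalized Vandermonde determinant `det (x_i ^ a_j)`, which is positive by
Rolle's theorem (it cannot vanish) and a deformation to the ordinary Vandermonde determinant.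
By Cauchy–Binet, `A * G(r)` is then totally positive, since `A` has a nonzero maximal minor.
As `r → 0`, `G(r) → 1`, so `π(A G(r) Z) → π(A Z) ≠ 0`, and `[π(A Z)]` is a limit of points
of the open Grasstope.
-/

open Finset Filter Topology

theorem eq_zero_of_forall_sum_mul_rpow_eq_zero {k : ℕ} {a x c : Fin k → ℝ} (ha : StrictMono a)
    (hx0 : ∀ i, 0 < x i) (hx : StrictMono x) (h : ∀ i, ∑ j, c j * x i ^ a j = 0) : c = 0 := by
  induction k with
  | zero => exact Subsingleton.elim _ _
  | succ k ih =>
    set b : Fin (k + 1) → ℝ := fun j => a j - a 0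
    set f : ℝ → ℝ := fun t => ∑ j, c j * t ^ b j
    set f' : ℝ → ℝ := fun t => ∑ j, c j * (b j * t ^ (b j - 1))
    have hf : ∀ t, 0 < t → HasDerivAt f (f' t) t := fun t ht =>
      HasDerivAt.fun_sum fun j _ => (Real.hasDerivAt_rpow_const (Or.inl ht.ne')).const_mul (c j)
    -- dividing by `t ^ a 0` makes the lowest exponent zero, so it disappears upon differentiating
    have hfx : ∀ i, f (x i) = 0 := fun i => by
      have hsplit : f (x i) * x i ^ a 0 = 0 := by
        rw [← h i, sum_mul]
        refine sum_congr rfl fun j _ => ?_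
        rw [mul_assoc, ← Real.rpow_add (hx0 i), sub_add_cancel]
      exact (mul_eq_zero.mp hsplit).resolve_right (Real.rpow_pos_of_pos (hx0 i) _).ne'
    have hrolle : ∀ i : Fin k, ∃ y ∈ Set.Ioo (x i.castSucc) (x i.succ), f' y = 0 := fun i =>
      exists_hasDerivAt_eq_zero (hx Fin.castSucc_lt_succ)
        (fun t ht => (hf t ((hx0 _).trans_le ht.1)).continuousAt.continuousWithinAt)
        (by rw [hfx, hfx]) (fun t ht => hf t ((hx0 _).trans ht.1))
    choose y hy hy0 using hrolle
    have hb : ∀ j : Fin k, 0 < b j.succ := fun j => sub_pos.mpr (ha j.succ_pos)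
    have htail : (fun j : Fin k => c j.succ * b j.succ) = 0 := by
      refine ih (a := fun j => b j.succ - 1) (x := y) (fun i j hij => ?_)
        (fun i => (hx0 _).trans (hy i).1) (fun i j hij => ?_) (fun i => ?_)
      · simpa [b] using ha (Fin.succ_lt_succ_iff.mpr hij)
      · exact (hy i).2.trans ((hx.monotone (Fin.succ_le_castSucc_iff.mpr hij)).trans_lt (hy j).1)
      · simpa [f', Fin.sum_univ_succ, b, mul_assoc] using hy0 i
    have hsucc : ∀ j : Fin k, c j.succ = 0 := fun j =>
      (mul_eq_zero.mp (congrFun htail j)).resolve_right (hb j).ne'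
    have hzero : c 0 = 0 := by
      simpa [Fin.sum_univ_succ, hsucc, (Real.rpow_pos_of_pos (hx0 0) _).ne'] using h 0
    ext j
    exact Fin.cases hzero hsucc j

theorem det_rpow_ne_zero {k : ℕ} {x a : Fin k → ℝ} (hx0 : ∀ i, 0 < x i) (hx : StrictMono x)
    (ha : StrictMono a) : (of fun i j => x i ^ a j).det ≠ 0 := by
  intro hdet
  obtain ⟨c, hc, hMc⟩ := exists_mulVec_eq_zero_iff.mpr hdet
  refine hc (eq_zero_of_forall_sum_mul_rpow_eq_zero ha hx0 hx fun i => ?_)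
  simpa [mulVec, dotProduct, mul_comm] using congrFun hMc i

theorem StrictMono.one_sub_mul_add_mul {ι : Type*} [Preorder ι] {a b : ι → ℝ}
    (ha : StrictMono a) (hb : StrictMono b) {t : ℝ} (ht₀ : 0 ≤ t) (ht₁ : t ≤ 1) :
    StrictMono fun j => (1 - t) * a j + t * b j := by
  rcases ht₀.eq_or_lt with rfl | ht
  · simpa using ha
  · exact fun i j hij => add_lt_add_of_le_of_lt
      (mul_le_mul_of_nonneg_left (ha hij).le (sub_nonneg.mpr ht₁))
      (mul_lt_mul_of_pos_left (hb hij) ht)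

theorem det_rpow_pos {k : ℕ} {x a : Fin k → ℝ} (hx0 : ∀ i, 0 < x i) (hx : StrictMono x)
    (ha : StrictMono a) : 0 < (of fun i j => x i ^ a j).det := by
  -- deform the exponents linearly to `0, 1, …, k - 1`, where the determinant is Vandermonde's
  set D : ℝ → ℝ := fun t => (of fun i j => x i ^ ((1 - t) * a j + t * (j : ℕ))).det
  have hD : ∀ t ∈ Set.Icc (0 : ℝ) 1, D t ≠ 0 := fun t ht =>
    det_rpow_ne_zero hx0 hx <| ha.one_sub_mul_add_mul (fun i j hij => Nat.cast_lt.mpr hij) ht.1 ht.2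
  have hDc : Continuous D := by
    refine Continuous.matrix_det (continuous_matrix fun i j => ?_)
    exact continuous_const.rpow (by fun_prop) fun _ => Or.inl (hx0 i).ne'
  have hD1 : 0 < D 1 := by
    have : D 1 = (vandermonde x).det := by simp [D, vandermonde]
    rw [this, det_vandermonde]
    exact prod_pos fun i _ => prod_pos fun j hj => sub_pos.mpr (hx (mem_Ioi.mp hj))
  have hD0 : D 0 = (of fun i j => x i ^ a j).det := by simp [D]
  by_contra! hneg
  obtain ⟨t, ht, hDt⟩ := intermediate_value_Icc zero_le_one hDc.continuousOn
    ⟨hD0 ▸ hneg, hD1.le⟩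
  exact hD t ht hDt

-- The natural-number exponent makes `gaussMat n` polynomial in `r`, with `gaussMat n 0 = 1`.
noncomputable def gaussMat (n : ℕ) (r : ℝ) : Matrix (Fin n) (Fin n) ℝ :=
  of fun i j => r ^ ((i : ℕ) - (j : ℕ) : ℤ).natAbs ^ 2

theorem gaussMat_zero (n : ℕ) : gaussMat n 0 = 1 := by
  ext i j
  rcases eq_or_ne i j with rfl | hij
  · simp [gaussMat]
  · have : ((i : ℕ) - (j : ℕ) : ℤ).natAbs ≠ 0 := by
      simpa [sub_eq_zero, Fin.val_inj] using hij
    simp [gaussMat, hij, this]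

theorem continuous_gaussMat (n : ℕ) : Continuous (gaussMat n) :=
  continuous_matrix fun _ _ => continuous_pow _

theorem pow_natAbs_sub_sq {r : ℝ} (hr : 0 < r) (u v : ℕ) :
    r ^ ((u - v : ℤ).natAbs ^ 2) =
      r ^ (u ^ 2) * (r ^ (v ^ 2) * (r ^ (-2 * u : ℝ)) ^ (v : ℝ)) := by
  rw [← Real.rpow_mul hr.le, ← Real.rpow_natCast, ← Real.rpow_natCast r (u ^ 2),
    ← Real.rpow_natCast r (v ^ 2), ← Real.rpow_add hr, ← Real.rpow_add hr]
  congr 1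
  push_cast [Nat.cast_natAbs, sq_abs]
  ring

theorem det_submatrix_gaussMat_pos {n k : ℕ} {r : ℝ} (hr₀ : 0 < r) (hr₁ : r < 1)
    {f g : Fin k → Fin n} (hf : StrictMono f) (hg : StrictMono g) :
    0 < ((gaussMat n r).submatrix f g).det := by
  have hx : StrictMono fun i => r ^ (-2 * (f i : ℕ) : ℝ) := fun i j hij =>
    Real.rpow_lt_rpow_of_exponent_gt hr₀ hr₁ (by
      have : ((f i : ℕ) : ℝ) < (f j : ℕ) := by exact_mod_cast hf hij
      linarith)
  have hfactor : (gaussMat n r).submatrix f g = of fun i j => r ^ ((f i : ℕ) ^ 2) *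
      of (fun i j => r ^ ((g j : ℕ) ^ 2) *
        of (fun i j => (r ^ (-2 * (f i : ℕ) : ℝ)) ^ ((g j : ℕ) : ℝ)) i j) i j := by
    ext i j
    exact pow_natAbs_sub_sq hr₀ _ _
  rw [hfactor, det_mul_column, det_mul_row]
  have hV := det_rpow_pos (fun i => Real.rpow_pos_of_pos hr₀ _) hx
    (a := fun j => ((g j : ℕ) : ℝ)) fun i j hij => Nat.cast_lt.mpr (hg hij)
  positivity

theorem Matrix.det_mul_eq_sum_det_submatrix_mul_prod {R : Type*} [CommRing R] {k n : ℕ}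
    (A : Matrix (Fin k) (Fin n) R) (B : Matrix (Fin n) (Fin k) R) :
    (A * B).det = ∑ p : Fin k → Fin n, (A.submatrix id p).det * ∏ i, B (p i) i := by
  simp only [det_apply', mul_apply, prod_univ_sum, mul_sum, Fintype.piFinset_univ, sum_mul,
    submatrix_apply, id, prod_mul_distrib]
  rw [sum_comm]
  simp only [mul_assoc]

theorem Function.Injective.exists_eq_orderEmbOfFin_comp {k n : ℕ} {p : Fin k → Fin n}
    (hp : p.Injective) :
    ∃ (S : {S : Finset (Fin n) // S.card = k}) (σ : Equiv.Perm (Fin k)),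
      p = S.1.orderEmbOfFin S.2 ∘ σ := by
  have hS : (univ.image p).card = k := by simp [card_image_of_injective _ hp]
  have hsort : StrictMono (p ∘ Tuple.sort p) :=
    (Tuple.monotone_sort p).strictMono_of_injective (hp.comp (Tuple.sort p).injective)
  refine ⟨⟨_, hS⟩, (Tuple.sort p)⁻¹, funext fun i => ?_⟩
  rw [← orderEmbOfFin_unique hS (fun i => mem_image_of_mem _ (mem_univ _)) hsort]
  simp

theorem Matrix.det_mul_eq_sum_det_submatrix_mul_det_submatrix {R : Type*} [CommRing R] {k n : ℕ}
    (A : Matrix (Fin k) (Fin n) R) (B : Matrix (Fin n) (Fin k) R) :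
    (A * B).det = ∑ S : {S : Finset (Fin n) // S.card = k},
      (A.submatrix id (S.1.orderEmbOfFin S.2)).det *
        (B.submatrix (S.1.orderEmbOfFin S.2) id).det := by
  classical
  set F : (Fin k → Fin n) → R := fun p => (A.submatrix id p).det * ∏ i, B (p i) i
  set g : {S : Finset (Fin n) // S.card = k} × Equiv.Perm (Fin k) → (Fin k → Fin n) :=
    fun Sσ => Sσ.1.1.orderEmbOfFin Sσ.1.2 ∘ Sσ.2
  have hg : g.Injective := by
    rintro ⟨⟨S, hS⟩, σ⟩ ⟨⟨T, hT⟩, τ⟩ h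
    have hST : S = T := by
      have := congrArg Set.range h
      simpa [g, Set.range_comp, EquivLike.range_comp] using this
    subst hST
    simpa [g, (S.orderEmbOfFin hS).injective.comp_left.eq_iff] using h
  have hF : ∀ p ∉ univ.image g, F p = 0 := fun p hp => by
    by_cases hinj : p.Injective
    · obtain ⟨S, σ, rfl⟩ := hinj.exists_eq_orderEmbOfFin_comp
      exact absurd (mem_image_of_mem g (mem_univ (S, σ))) hp
    · obtain ⟨i, j, hpij, hij⟩ := Function.not_injective_iff.mp hinj
      have hA : (A.submatrix id p).det = 0 := det_zero_of_column_eq hij fun l => by simp [hpij]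
      simp [F, hA]
  rw [det_mul_eq_sum_det_submatrix_mul_prod, ← sum_subset (subset_univ _) fun p _ => hF p,
    sum_image hg.injOn, Fintype.sum_prod_type]
  refine sum_congr rfl fun S _ => ?_
  rw [det_apply' (B.submatrix _ id), mul_sum]
  refine sum_congr rfl fun σ _ => ?_
  rw [show F (g (S, σ)) = ((A.submatrix id (S.1.orderEmbOfFin S.2)).submatrix id σ).det *
    ∏ i, B (S.1.orderEmbOfFin S.2 (σ i)) i from rfl, det_permute']
  simp only [submatrix_apply, id]
  ring

theorem Matrix.det_ne_zero_of_rank_eq {K : Type*} [Field K] {k : ℕ} {M : Matrix (Fin k) (Fin k) K}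
    (h : M.rank = k) : M.det ≠ 0 := by
  have hrange : LinearMap.range M.mulVecLin = ⊤ :=
    Submodule.eq_top_of_finrank_eq (by rw [← rank, h, Module.finrank_fin_fun])
  have hsurj : Function.Surjective M.mulVec := LinearMap.range_eq_top.mp hrange
  exact ((isUnit_iff_isUnit_det M).mp (mulVec_surjective_iff_isUnit.mp hsurj)).ne_zero

theorem exists_minorCols_ne_zero {k n : ℕ} {A : Matrix (Fin k) (Fin n) ℝ} (h : A.rank = k) :
    ∃ (S : Finset (Fin n)) (hS : S.card = k), minorCols A S hS ≠ 0 := by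
  -- Cauchy–Binet expresses `det (A * Aᵀ)` as the sum of the squares of the maximal minors
  have hsq : (A * Aᵀ).det =
      ∑ S : {S : Finset (Fin n) // S.card = k}, minorCols A S.1 S.2 ^ 2 := by
    rw [det_mul_eq_sum_det_submatrix_mul_det_submatrix]
    refine sum_congr rfl fun S _ => ?_
    rw [← transpose_submatrix, det_transpose, sq]
    rfl
  have hne := det_ne_zero_of_rank_eq ((rank_self_mul_transpose A).trans h)
  by_contra! hzero
  exact hne (hsq.trans (sum_eq_zero fun S _ => by simp [hzero]))

theorem IsTotallyNonneg.isTotallyPos_mul {k n m : ℕ} {A : Matrix (Fin k) (Fin n) ℝ}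
    (hA : IsTotallyNonneg A) (hrank : A.rank = k) {G : Matrix (Fin n) (Fin m) ℝ}
    (hG : ∀ f : Fin k → Fin n, ∀ g : Fin k → Fin m, StrictMono f → StrictMono g →
      0 < (G.submatrix f g).det) :
    IsTotallyPos (A * G) := by
  intro J hJ
  obtain ⟨S₀, hS₀, hA₀⟩ := exists_minorCols_ne_zero hrank
  have hGpos : ∀ (S : Finset (Fin n)) (hS : S.card = k),
      0 < minorRows (G.submatrix id (J.orderEmbOfFin hJ)) S hS := fun S hS =>
    hG _ _ (S.orderEmbOfFin hS).strictMono (J.orderEmbOfFin hJ).strictMono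
  change 0 < (A * G.submatrix id (J.orderEmbOfFin hJ)).det
  rw [det_mul_eq_sum_det_submatrix_mul_det_submatrix]
  exact sum_pos' (fun S _ => mul_nonneg (hA S.1 S.2) (hGpos S.1 S.2).le)
    ⟨⟨S₀, hS₀⟩, mem_univ _, mul_pos ((hA S₀ hS₀).lt_of_ne' hA₀) (hGpos S₀ hS₀)⟩

theorem rank_eq_of_piVec_ne_zero {k : ℕ} {M : Matrix (Fin k) (Fin (k + 1)) ℝ}
    (h : piVec M ≠ 0) : M.rank = k := by
  obtain ⟨j, hj⟩ := Function.ne_iff.mp h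
  have hdet : (M.submatrix id j.succAbove).det ≠ 0 := by
    simpa [piVec] using hj
  refine le_antisymm M.rank_le_height ?_
  simpa using (rank_of_det_ne_zero hdet).symm.trans_le (M.rank_submatrix_le id j.succAbove)

theorem continuous_piVec {k : ℕ} : Continuous (piVec : Matrix (Fin k) (Fin (k + 1)) ℝ → _) :=
  continuous_pi fun j =>
    continuous_const.mul (continuous_id.matrix_submatrix id j.succAbove).matrix_det

theorem Projectivization.mk_mem_closure_of_tendsto {K V α : Type*} [DivisionRing K]
    [AddCommGroup V] [Module K V] [TopologicalSpace V] {l : Filter α} [l.NeBot] {v : α → V}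
    {v₀ : V} (hv₀ : v₀ ≠ 0) (hv : Tendsto v l (𝓝 v₀)) {s : Set (Projectivization K V)}
    (hs : ∀ᶠ a in l, ∃ h : v a ≠ 0, mk K (v a) h ∈ s) :
    mk K v₀ hv₀ ∈ closure s := by
  have hmk : Continuous fun w : {w : V // w ≠ 0} => mk K w.1 w.2 := continuous_quotient_mk'
  refine mem_closure_iff.mpr fun U hU hv₀U => ?_
  obtain ⟨O, hO, hOU⟩ := isOpen_induced_iff.mp (hU.preimage hmk)
  have hOU' := fun w => Set.ext_iff.mp hOU w
  obtain ⟨a, hvaO, hva, hvas⟩ :=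
    ((hv.eventually_mem (hO.mem_nhds ((hOU' ⟨v₀, hv₀⟩).mpr hv₀U))).and hs).exists
  exact ⟨_, (hOU' ⟨v a, hva⟩).mp hvaO, hvas⟩

theorem stmt11_general (k n : ℕ)
    (Z : Matrix (Fin n) (Fin (k + 1)) ℝ) :
    grasstope1 Z ⊆ closure (openGrasstope1 Z) := by
  rintro _ ⟨A, hAZ, hA, hrankA, -, rfl⟩
  have hlim :
      Tendsto (fun r => piVec (A * gaussMat n r * Z)) (𝓝[>] 0) (𝓝 (piVec (A * Z))) := by
    have hcont : Continuous fun r => piVec (A * gaussMat n r * Z) :=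
      continuous_piVec.comp ((continuous_const.matrix_mul (continuous_gaussMat n)).matrix_mul
        continuous_const)
    simpa [gaussMat_zero] using (hcont.tendsto 0).mono_left nhdsWithin_le_nhds
  refine Projectivization.mk_mem_closure_of_tendsto hAZ hlim ?_
  filter_upwards [Ioo_mem_nhdsGT one_pos, hlim.eventually_ne hAZ] with r hr hne
  exact ⟨hne, A * gaussMat n r, hne, hA.isTotallyPos_mul hrankA
    fun _ _ => det_submatrix_gaussMat_pos hr.1 hr.2, rank_eq_of_piVec_ne_zero hne, rfl⟩

/-- If `Z` has rank `k+1` and no zero rows, then the rational Grasstope of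
`Z` is contained in the topological closure of the open rational Grasstope of `Z`. -/
theorem stmt11 (k n : ℕ) (hk : 1 ≤ k) (hn : k + 1 ≤ n)
    (Z : Matrix (Fin n) (Fin (k + 1)) ℝ) (hZ : Z.rank = k + 1)
    (hrows : ∀ i : Fin n, Z i ≠ 0) :
    grasstope1 Z ⊆ closure (openGrasstope1 Z) :=
  stmt11_general k n Z
end

section
/- Let k ≥ 1, n ≥ k+1, and let Z be a real n×(k+1) matrix of rank k+1. Then the set {[x] ∈ ℝP^k : v̄ar(Zx) ≥ k} is a closed subset of ℝP^k (equivalently, its complement {[x] : v̄ar(Zx) < k} is open). -/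
/-!
`v̄ar` is upper semicontinuous: every vector `u` near `v` has the same sign as `v` at the
nonzero entries of `v`, so any choice of signs at the zero entries of `u` is also one at the
zero entries of `v`. Hence `{x | v̄ar (Z x) ≥ k}` is closed, and since it is a cone (`v̄ar` is
invariant under nonzero scaling) its image in projective space is closed for the quotient
topology.
-/

open Matrix

open Filter Topology

section SignVariation

variable {n : ℕ}

lemma signVar_comp (f : ℝ → ℝ) (hf₀ : ∀ x, f x = 0 ↔ x = 0)
    (hf : ∀ x y, f x * f y < 0 ↔ x * y < 0) (v : Fin n → ℝ) :
    signVar (f ∘ v) = signVar v := by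
  have hfilter : (List.ofFn (f ∘ v)).filter (fun x => x ≠ 0)
      = ((List.ofFn v).filter (fun x => x ≠ 0)).map f := by
    rw [← List.map_ofFn, List.filter_map]
    exact congrArg _ (List.filter_congr fun x _ => by simp [hf₀])
  simp only [signVar, hfilter, ← List.map_tail, List.zipWith_map]
  rw [show (fun a b => f a * f b) = Function.curry (fun p : ℝ × ℝ => f p.1 * f p.2) from rfl,
    show (fun a b : ℝ => a * b) = Function.curry (fun p : ℝ × ℝ => p.1 * p.2) from rfl,
    ← List.map_zip_eq_zipWith, ← List.map_zip_eq_zipWith, List.countP_map, List.countP_map]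
  exact List.countP_congr fun p _ => by simp [hf]

lemma signVar_smul {c : ℝ} (hc : c ≠ 0) (v : Fin n → ℝ) : signVar (c • v) = signVar v :=
  signVar_comp (c * ·) (by simp [hc]) (fun x y => by
    rw [mul_mul_mul_comm, ← smul_eq_mul (c * c), smul_neg_iff_of_pos_left (mul_self_pos.2 hc)]) v

lemma signVar_congr_sign {v w : Fin n → ℝ}
    (h : ∀ i, SignType.sign (v i) = SignType.sign (w i)) : signVar v = signVar w := by
  have coe_sign_eq_zero (z : ℝ) : ((SignType.sign z : SignType) : ℝ) = 0 ↔ z = 0 := by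
    rcases lt_trichotomy z 0 with hz | rfl | hz
    · simp [sign_neg hz, hz.ne]
    · simp
    · simp [sign_pos hz, hz.ne']
  have coe_sign_neg (z : ℝ) : ((SignType.sign z : SignType) : ℝ) < 0 ↔ z < 0 := by
    rcases lt_trichotomy z 0 with hz | rfl | hz
    · simp [sign_neg hz, hz]
    · simp
    · simp [sign_pos hz, hz.not_gt]
  have signVar_sign (u : Fin n → ℝ) :
      signVar (fun i => ((SignType.sign (u i) : SignType) : ℝ)) = signVar u :=
    signVar_comp _ coe_sign_eq_zero
      (fun x y => by rw [← SignType.coe_mul, ← sign_mul, coe_sign_neg]) u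
  rw [← signVar_sign v, ← signVar_sign w]
  simp only [h]

lemma signVar_le (v : Fin n → ℝ) : signVar v ≤ n := by
  unfold signVar
  refine List.countP_le_length.trans ?_
  rw [List.length_zipWith]
  exact (min_le_left _ _).trans ((List.length_filter_le _ _).trans (by simp))

lemma signVar_le_signVarBar {v w : Fin n → ℝ} (hw : ∀ i, v i ≠ 0 → w i = v i) :
    signVar w ≤ signVarBar v :=
  le_csSup ⟨n, by rintro _ ⟨u, -, rfl⟩; exact signVar_le u⟩ ⟨w, hw, rfl⟩

lemma signVarBar_le {v : Fin n → ℝ} {m : ℕ}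
    (h : ∀ w : Fin n → ℝ, (∀ i, v i ≠ 0 → w i = v i) → signVar w ≤ m) : signVarBar v ≤ m :=
  csSup_le ⟨signVar v, v, fun _ _ => rfl, rfl⟩ (by rintro _ ⟨w, hw, rfl⟩; exact h w hw)

lemma signVarBar_le_smul {c : ℝ} (hc : c ≠ 0) (v : Fin n → ℝ) :
    signVarBar v ≤ signVarBar (c • v) :=
  signVarBar_le fun w hw => by
    rw [← signVar_smul hc w]
    refine signVar_le_signVarBar fun i hi => ?_
    simp only [Pi.smul_apply, smul_eq_mul, ne_eq, mul_eq_zero, hc, false_or] at hi ⊢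
    rw [hw i hi]

lemma signVarBar_smul {c : ℝ} (hc : c ≠ 0) (v : Fin n → ℝ) :
    signVarBar (c • v) = signVarBar v := by
  refine le_antisymm ?_ (signVarBar_le_smul hc v)
  simpa [inv_smul_smul₀ hc] using signVarBar_le_smul (inv_ne_zero hc) (c • v)

lemma signVarBar_le_of_sign_eq {u v : Fin n → ℝ}
    (h : ∀ i, v i ≠ 0 → SignType.sign (u i) = SignType.sign (v i)) :
    signVarBar u ≤ signVarBar v :=
  signVarBar_le fun w hw => by
    let w' : Fin n → ℝ := fun i => if v i = 0 then w i else v i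
    have hsign (i : Fin n) : SignType.sign (w i) = SignType.sign (w' i) := by
      by_cases hv : v i = 0
      · simp [w', hv]
      · have hu : u i ≠ 0 := by
          rw [← sign_ne_zero, h i hv, sign_ne_zero]; exact hv
        simp [w', hv, hw i hu, h i hv]
    rw [signVar_congr_sign hsign]
    exact signVar_le_signVarBar fun i hi => by simp [w', hi]

lemma upperSemicontinuous_signVarBar : UpperSemicontinuous (signVarBar : (Fin n → ℝ) → ℕ) := by
  intro v m hm
  have hsign : ∀ᶠ u in 𝓝 v, ∀ i, v i ≠ 0 → SignType.sign (u i) = SignType.sign (v i) := by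
    refine eventually_all.2 fun i => ?_
    by_cases hv : v i = 0
    · exact .of_forall fun _ h => absurd hv h
    · have hcont : ContinuousAt (fun u : Fin n → ℝ => SignType.sign (u i)) v :=
        (continuousAt_sign_of_ne_zero hv).comp (f := fun u : Fin n → ℝ => u i)
          (continuous_apply i).continuousAt
      rw [ContinuousAt, nhds_discrete SignType, tendsto_pure] at hcont
      exact hcont.mono fun u hu _ => hu
  exact hsign.mono fun u hu => (signVarBar_le_of_sign_eq hu).trans_lt hm

end SignVariation

lemma Projectivization.isClosed_setOf_rep_mem {K V : Type*} [DivisionRing K] [AddCommGroup V]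
    [Module K V] [TopologicalSpace V] {S : Set V} (hS : IsClosed S)
    (hsmul : ∀ (a : Kˣ) (v : V), v ∈ S → a • v ∈ S) :
    IsClosed {P : Projectivization K V | P.rep ∈ S} := by
  have hq : Topology.IsQuotientMap (Projectivization.mk' K : {v : V // v ≠ 0} → _) :=
    isQuotientMap_quot_mk
  rw [← hq.isClosed_preimage]
  convert hS.preimage continuous_subtype_val using 1
  ext ⟨v, hv⟩
  obtain ⟨a, ha⟩ := Projectivization.exists_smul_eq_mk_rep K v hv
  simp only [Set.mem_preimage, Set.mem_ofPred_eq]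
  change (Projectivization.mk K v hv).rep ∈ S ↔ v ∈ S
  rw [← ha]
  exact ⟨fun h => by simpa using hsmul a⁻¹ _ h, hsmul a v⟩

theorem stmt12_general (k n : ℕ)
    (Z : Matrix (Fin n) (Fin (k + 1)) ℝ) :
    IsClosed {P : Projectivization ℝ (Fin (k + 1) → ℝ) |
      k ≤ signVarBar (Z.mulVec P.rep)} := by
  have hclosed : IsClosed {x : Fin (k + 1) → ℝ | k ≤ signVarBar (Z.mulVec x)} :=
    (upperSemicontinuous_signVarBar.comp (Matrix.mulVecLin Z).continuous_of_finiteDimensional)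
      |>.isClosed_preimage k
  refine Projectivization.isClosed_setOf_rep_mem hclosed fun a x hx => ?_
  rwa [Set.mem_ofPred_eq, Units.smul_def, Matrix.mulVec_smul, signVarBar_smul a.ne_zero]

/-- For `Z` of rank `k+1`, the set `{[x] ∈ ℝP^k : v̄ar(Zx) ≥ k}` is closed.
(Membership is tested on the chosen representative `P.rep`; since `v̄ar(Zx)` is invariant
under nonzero rescaling of `x`, this defines the intended set.) -/
theorem stmt12 (k n : ℕ) (hk : 1 ≤ k) (hn : k + 1 ≤ n)
    (Z : Matrix (Fin n) (Fin (k + 1)) ℝ) (hZ : Z.rank = k + 1) :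
    IsClosed {P : Projectivization ℝ (Fin (k + 1) → ℝ) |
      k ≤ signVarBar (Z.mulVec P.rep)} :=
  stmt12_general k n Z
end

section
/- Let Z be the 6×3 real matrix with rows (2,2,2), (2,3,2), (0,1,0), (−1,0,0), (1,2,2), (0,0,1). Then for every real 3×2 matrix M, it is not the case that all fifteen 2×2 minors of the 6×2 matrix ZM (one for each pair of rows) are strictly positive. In particular, Z does not satisfy condition (★) for k = 2, m = 1, n = 6. -/
open Matrix

/-- Galashin's matrix: the `6 × 3` matrix with rows
`(2,2,2), (2,3,2), (0,1,0), (-1,0,0), (1,2,2), (0,0,1)`. -/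
noncomputable def Zwild : Matrix (Fin 6) (Fin 3) ℝ :=
  !![2, 2, 2; 2, 3, 2; 0, 1, 0; -1, 0, 0; 1, 2, 2; 0, 0, 1]

/-
The rows of `Zwild` satisfy `z₀ = z₄ - z₃`, and this relation survives right multiplication
by `M`. Writing `vᵢ` for the rows of `Zwild * M`, bilinearity and antisymmetry of the `2 × 2`
determinant give `det(v₀, v₃) = det(v₄, v₃) = -det(v₃, v₄)`, so these two minors cannot both
be positive.
-/

lemma minorRows_pair {n : ℕ} (B : Matrix (Fin n) (Fin 2) ℝ) {a b : Fin n} (hab : a < b)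
    (h : ({a, b} : Finset (Fin n)).card = 2) :
    minorRows B {a, b} h = B a 0 * B b 1 - B a 1 * B b 0 := by
  have hmono : StrictMono ![a, b] := by
    intro i j hij
    fin_cases i <;> fin_cases j <;> simp_all
  have hmem : ∀ i, ![a, b] i ∈ ({a, b} : Finset (Fin n)) := by
    intro i; fin_cases i <;> simp
  have horder : ∀ i, (({a, b} : Finset (Fin n)).orderIsoOfFin h i : Fin n) = ![a, b] i :=
    congrFun (Finset.orderEmbOfFin_unique h hmem hmono).symm
  rw [minorRows, det_fin_two]
  simp [horder]

lemma Zwild_row_zero : Zwild 0 = Zwild 4 - Zwild 3 := by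
  ext j
  fin_cases j <;> simp [Zwild, cons_val, sub_neg_eq_add, one_add_one_eq_two]

lemma mul_row_eq_sub_of_row_eq_sub {m n o R : Type*} [Fintype n] [Ring R]
    {A : Matrix m n R} {i j k : m} (h : A i = A j - A k) (M : Matrix n o R) :
    (A * M) i = (A * M) j - (A * M) k := by
  simp only [mul_apply_eq_vecMul, h, sub_vecMul]

/-- For every real `3 × 2` matrix `M`, not all fifteen `2 × 2` minors of
the `6 × 2` matrix `Zwild * M` (one for each pair of rows) are strictly positive; i.e. `Zwild`
does not satisfy condition (★) for `k = 2`, `m = 1`, `n = 6`. -/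
theorem stmt14 :
    ∀ M : Matrix (Fin 3) (Fin 2) ℝ,
      ¬ (∀ (S : Finset (Fin 6)) (hS : S.card = 2), 0 < minorRows (Zwild * M) S hS) := by
  intro M hpos
  set B := Zwild * M
  have h03 := hpos {0, 3} (by decide)
  have h34 := hpos {3, 4} (by decide)
  have hrow : B 0 = B 4 - B 3 := mul_row_eq_sub_of_row_eq_sub Zwild_row_zero M
  rw [minorRows_pair B (by decide)] at h03 h34
  rw [hrow] at h03
  simp only [Pi.sub_apply] at h03
  linarith
end

section
/- Let 1 ≤ k ≤ n and let N be a real n×k matrix whose k×k minors Δ_I(N) (indexed by k-element subsets I of {1,…,n}) do not all have the same strict sign; that is, either some Δ_I(N) = 0, or there exist I, J with Δ_I(N) > 0 > Δ_J(N). Then there exists a totally nonnegative k×n matrix A of rank k such that the sum over all k-element subsets I ⊆ {1,…,n} of Δ_I(N)·Δ_I(A) equals 0, where Δ_I(N) is the minor of N on rows I and Δ_I(A) is the maximal minor of A on columns I. -/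
open Matrix

namespace Stmt19

variable {k n : ℕ}

/-- The goal predicate. -/
def Good (N : Matrix (Fin n) (Fin k) ℝ) (A : Matrix (Fin k) (Fin n) ℝ) : Prop :=
  IsTotallyNonneg A ∧ A.rank = k ∧
    ∑ S : {S : Finset (Fin n) // S.card = k},
      minorRows N S.1 S.2 * minorCols A S.1 S.2 = 0

/-- Interpolation matrix between two coordinate matrices. -/
noncomputable def Amat (S S' : Finset (Fin n)) (hS : S.card = k) (hS' : S'.card = k) (t : ℝ) :
    Matrix (Fin k) (Fin n) ℝ :=
  Matrix.of fun i j =>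
    (1 - t) * (if j = S.orderEmbOfFin hS i then 1 else 0) +
    t * (if j = S'.orderEmbOfFin hS' i then 1 else 0)

lemma minorCols_eq (A : Matrix (Fin k) (Fin n) ℝ) (S : Finset (Fin n)) (hS : S.card = k) :
    minorCols A S hS = (A.submatrix id (fun i => S.orderEmbOfFin hS i)).det := by
  unfold minorCols; congr 1

lemma minor_Amat_self (S : Finset (Fin n)) (hS : S.card = k) (t : ℝ) :
    minorCols (Amat S S hS hS t) S hS = 1 := by
  rw [minorCols_eq]
  have : (Amat S S hS hS t).submatrix id (fun i => S.orderEmbOfFin hS i) = 1 := by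
    ext i j
    simp only [Amat, submatrix_apply, id_eq, of_apply, Matrix.one_apply]
    rcases eq_or_ne j i with rfl | hji
    · simp
    · have : S.orderEmbOfFin hS j ≠ S.orderEmbOfFin hS i :=
        fun h => hji ((S.orderEmbOfFin hS).injective h)
      simp [this, Ne.symm hji]
  rw [this, det_one]

lemma minor_Amat_ne (S S' C : Finset (Fin n)) (hS : S.card = k) (hS' : S'.card = k)
    (hC : C.card = k) (t : ℝ)
    (h : ∃ i : Fin k, S.orderEmbOfFin hS i ∉ C ∧ S'.orderEmbOfFin hS' i ∉ C) :
    minorCols (Amat S S' hS hS' t) C hC = 0 := by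
  rw [minorCols_eq]
  obtain ⟨i, h1, h2⟩ := h
  apply Matrix.det_eq_zero_of_row_eq_zero i
  intro j
  have e1 : C.orderEmbOfFin hC j ≠ S.orderEmbOfFin hS i := by
    intro h; exact h1 (h ▸ (C.orderEmbOfFin_mem hC j))
  have e2 : C.orderEmbOfFin hC j ≠ S'.orderEmbOfFin hS' i := by
    intro h; exact h2 (h ▸ (C.orderEmbOfFin_mem hC j))
  simp [Amat, e1, e2]

lemma exists_missing (S C : Finset (Fin n)) (hS : S.card = k) (hC : C.card = k) (hne : C ≠ S) :
    ∃ i : Fin k, S.orderEmbOfFin hS i ∉ C := by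
  have : ¬ S ⊆ C := fun hsub => hne (Finset.eq_of_subset_of_card_le hsub (by rw [hS, hC])).symm
  obtain ⟨x, hxS, hxC⟩ := Finset.not_subset.1 this
  refine ⟨(S.orderIsoOfFin hS).symm ⟨x, hxS⟩, ?_⟩
  rw [← Finset.coe_orderIsoOfFin_apply]
  simpa using hxC

lemma rank_eq_of_minor_ne (A : Matrix (Fin k) (Fin n) ℝ) (S : Finset (Fin n))
    (hS : S.card = k) (h : minorCols A S hS ≠ 0) : A.rank = k := by
  apply le_antisymm
  · exact A.rank_le_card_height.trans (Fintype.card_fin k).le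
  · set f := fun i => S.orderEmbOfFin hS i with hf
    have hdet : (A.submatrix id f).det ≠ 0 := by rw [← minorCols_eq]; exact h
    have hunit : IsUnit (A.submatrix id f) :=
      (Matrix.isUnit_iff_isUnit_det _).2 (isUnit_iff_ne_zero.2 hdet)
    have hrank : (A.submatrix id f).rank = k := by
      rw [Matrix.rank_of_isUnit _ hunit, Fintype.card_fin]
    have hmul : A * (1 : Matrix (Fin n) (Fin n) ℝ).submatrix (Equiv.refl (Fin n)) f
        = A.submatrix id f := by
      rw [Matrix.mul_submatrix_one]
      rfl
    calc k = (A.submatrix id f).rank := hrank.symm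
      _ = (A * (1 : Matrix (Fin n) (Fin n) ℝ).submatrix (Equiv.refl (Fin n)) f).rank := by
          rw [hmul]
      _ ≤ A.rank := Matrix.rank_mul_le_left _ _

/-- Case of a vanishing minor. -/
lemma good_of_zero (N : Matrix (Fin n) (Fin k) ℝ) (S : Finset (Fin n)) (hS : S.card = k)
    (hzero : minorRows N S hS = 0) : ∃ A, Good N A := by
  refine ⟨Amat S S hS hS 0, ?_, ?_, ?_⟩
  · intro C hC
    rcases eq_or_ne C S with rfl | hne
    · rw [minor_Amat_self]; norm_num
    · obtain ⟨i, hi⟩ := exists_missing S C hS hC hne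
      rw [minor_Amat_ne S S C hS hS hC 0 ⟨i, hi, hi⟩]
  · exact rank_eq_of_minor_ne _ S hS (by rw [minor_Amat_self]; norm_num)
  · rw [Fintype.sum_eq_single (⟨S, hS⟩ : {S : Finset (Fin n) // S.card = k})]
    · rw [hzero, zero_mul]
    · intro T hT
      have hne : T.1 ≠ S := fun h => hT (Subtype.ext h)
      obtain ⟨i, hi⟩ := exists_missing S T.1 hS T.2 hne
      rw [minor_Amat_ne S S T.1 hS hS T.2 0 ⟨i, hi, hi⟩, mul_zero]

section adj

variable (N : Matrix (Fin n) (Fin k) ℝ)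
  (S : Finset (Fin n)) (hS : S.card = k) (S' : Finset (Fin n)) (hS' : S'.card = k)
  (a b : Fin n) (ha : a ∈ S) (hb : b ∉ S) (p : Fin k) (t : ℝ)
  (hp : S.orderEmbOfFin hS p = a)
  (hg : ∀ i, S'.orderEmbOfFin hS' i = if i = p then b else S.orderEmbOfFin hS i)

include ha hb hp hg

omit ha in
lemma minor_on_S : minorCols (Amat S S' hS hS' t) S hS = 1 - t := by
  rw [minorCols_eq]
  have hd : (Amat S S' hS hS' t).submatrix id (fun i => S.orderEmbOfFin hS i)
      = Matrix.diagonal (fun i => if i = p then 1 - t else 1) := by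
    ext i j
    simp only [Amat, submatrix_apply, id_eq, of_apply, Matrix.diagonal_apply, hg]
    rcases eq_or_ne i j with rfl | hij
    · rcases eq_or_ne i p with rfl | hip
      · have : S.orderEmbOfFin hS i ≠ b := fun h => hb (h ▸ Finset.orderEmbOfFin_mem S hS i)
        simp [this]
      · simp [hip]
    · have h1 : S.orderEmbOfFin hS j ≠ S.orderEmbOfFin hS i :=
        fun h => hij ((S.orderEmbOfFin hS).injective h).symm
      rcases eq_or_ne i p with rfl | hip
      · have : S.orderEmbOfFin hS j ≠ b := fun h => hb (h ▸ Finset.orderEmbOfFin_mem S hS j)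
        simp [h1, this, hij]
      · simp [h1, hip, hij]
  rw [hd, Matrix.det_diagonal]
  simp [Finset.prod_ite_eq']

lemma minor_on_S' : minorCols (Amat S S' hS hS' t) S' hS' = t := by
  rw [minorCols_eq]
  have hinj : Function.Injective (S'.orderEmbOfFin hS') := (S'.orderEmbOfFin hS').injective
  have hd : (Amat S S' hS hS' t).submatrix id (fun i => S'.orderEmbOfFin hS' i)
      = Matrix.diagonal (fun i => if i = p then t else 1) := by
    ext i j
    simp only [Amat, submatrix_apply, id_eq, of_apply, Matrix.diagonal_apply]
    rcases eq_or_ne i j with rfl | hij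
    · rcases eq_or_ne i p with rfl | hip
      · have hb' : S'.orderEmbOfFin hS' i = b := by rw [hg]; simp
        have : b ≠ a := fun h => hb (h ▸ ha)
        have h2 : S'.orderEmbOfFin hS' i ≠ S.orderEmbOfFin hS i := by
          rw [hb', hp]; exact this
        simp [h2]
      · have h2 : S'.orderEmbOfFin hS' i = S.orderEmbOfFin hS i := by rw [hg, if_neg hip]
        simp [h2, hip]
    · have h1 : S'.orderEmbOfFin hS' j ≠ S'.orderEmbOfFin hS' i :=
        fun h => hij (hinj h).symm
      have h2 : S'.orderEmbOfFin hS' j ≠ S.orderEmbOfFin hS i := by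
        rcases eq_or_ne j p with rfl | hjp
        · have : S'.orderEmbOfFin hS' j = b := by rw [hg]; simp
          rw [this]; exact fun h => hb (h ▸ Finset.orderEmbOfFin_mem S hS i)
        · have : S'.orderEmbOfFin hS' j = S.orderEmbOfFin hS j := by rw [hg, if_neg hjp]
          rw [this]
          exact fun h => hij ((S.orderEmbOfFin hS).injective h).symm
      simp [h1, h2, hij]
  rw [hd, Matrix.det_diagonal]
  simp [Finset.prod_ite_eq']

lemma minor_other (C : Finset (Fin n)) (hC : C.card = k) (hCS : C ≠ S) (hCS' : C ≠ S')
    (hSset : S' = insert b (S.erase a)) :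
    minorCols (Amat S S' hS hS' t) C hC = 0 := by
  apply minor_Amat_ne
  by_contra hcon
  push_neg at hcon
  have herase : S.erase a ⊆ C := by
    intro x hx
    have hxS : x ∈ S := Finset.mem_of_mem_erase hx
    have hxa : x ≠ a := (Finset.mem_erase.1 hx).1
    obtain ⟨i, hi⟩ : ∃ i, S.orderEmbOfFin hS i = x := by
      refine ⟨(S.orderIsoOfFin hS).symm ⟨x, hxS⟩, ?_⟩
      rw [← Finset.coe_orderIsoOfFin_apply]; simp
    have hip : i ≠ p := fun h => hxa (by rw [← hi, h, hp])
    rcases Classical.em (S.orderEmbOfFin hS i ∈ C) with h | h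
    · rwa [hi] at h
    · have h2 := hcon i h
      rw [hg, if_neg hip] at h2
      exact absurd (hi ▸ h2) (hi ▸ h)
  rcases Classical.em (S.orderEmbOfFin hS p ∈ C) with h | h
  · rw [hp] at h
    have hsub : S ⊆ C := by
      intro x hx
      rcases eq_or_ne x a with rfl | hxa
      · exact h
      · exact herase (Finset.mem_erase.2 ⟨hxa, hx⟩)
    exact hCS (Finset.eq_of_subset_of_card_le hsub (by rw [hS, hC])).symm
  · have h2 := hcon p h
    rw [hg, if_pos rfl] at h2
    have hsub : S' ⊆ C := by
      rw [hSset]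
      intro x hx
      rcases Finset.mem_insert.1 hx with rfl | hx'
      · exact h2
      · exact herase hx'
    exact hCS' (Finset.eq_of_subset_of_card_le hsub (by rw [hS', hC])).symm

omit t in
/-- Case of two adjacent sets with minors of opposite signs. -/
lemma good_of_segment (hSset : S' = insert b (S.erase a))
    (hsign : minorRows N S hS * minorRows N S' hS' < 0) : ∃ A, Good N A := by
  set x := minorRows N S hS with hx
  set y := minorRows N S' hS' with hy
  have hd : x - y ≠ 0 := by
    intro h
    have hxy : x = y := by linarith
    rw [hxy] at hsign
    exact absurd hsign (not_lt.2 (mul_self_nonneg y))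
  set t : ℝ := x / (x - y) with htdef
  have ht01 : 0 < t ∧ t < 1 := by
    rcases mul_neg_iff.1 hsign with ⟨hx0, hy0⟩ | ⟨hx0, hy0⟩
    · have hdp : 0 < x - y := by linarith
      exact ⟨div_pos hx0 hdp, (div_lt_one hdp).2 (by linarith)⟩
    · have h1 : t = (-x) / ((-x) - (-y)) := by
        rw [htdef]; rw [div_eq_div_iff hd (by intro h; apply hd; linarith)]; ring
      have hdp : 0 < (-x) - (-y) := by linarith
      rw [h1]
      exact ⟨div_pos (by linarith) hdp, (div_lt_one hdp).2 (by linarith)⟩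
  have hSne : S ≠ S' := fun h =>
    hb (by rw [h, hSset]; exact Finset.mem_insert_self b _)
  refine ⟨Amat S S' hS hS' t, ?_, ?_, ?_⟩
  · intro C hC
    rcases eq_or_ne C S with rfl | hCS
    · rw [minor_on_S C hS S' hS' a b hb p t hp hg]; linarith [ht01.2]
    rcases eq_or_ne C S' with rfl | hCS'
    · rw [minor_on_S' S hS C hS' a b ha hb p t hp hg]; linarith [ht01.1]
    · rw [minor_other S hS S' hS' a b ha hb p t hp hg C hC hCS hCS' hSset]
  · apply rank_eq_of_minor_ne _ S hS
    rw [minor_on_S S hS S' hS' a b hb p t hp hg]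
    have := ht01.2; intro hcon; linarith
  · have hsum : ∑ C : {C : Finset (Fin n) // C.card = k},
        minorRows N C.1 C.2 * minorCols (Amat S S' hS hS' t) C.1 C.2
        = x * (1 - t) + y * t := by
      have hST : (⟨S, hS⟩ : {C : Finset (Fin n) // C.card = k}) ≠ ⟨S', hS'⟩ := by
        intro h; exact hSne (congrArg Subtype.val h)
      have hvan : ∀ C : {C : Finset (Fin n) // C.card = k},
          C ∈ (Finset.univ : Finset _) →
          C ∉ ({⟨S, hS⟩, ⟨S', hS'⟩} : Finset {C : Finset (Fin n) // C.card = k}) →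
          minorRows N C.1 C.2 * minorCols (Amat S S' hS hS' t) C.1 C.2 = 0 := by
        intro C _ hC
        simp only [Finset.mem_insert, Finset.mem_singleton] at hC
        push_neg at hC
        have h1 : C.1 ≠ S := fun h => hC.1 (Subtype.ext h)
        have h2 : C.1 ≠ S' := fun h => hC.2 (Subtype.ext h)
        rw [minor_other S hS S' hS' a b ha hb p t hp hg C.1 C.2 h1 h2 hSset, mul_zero]
      rw [← Finset.sum_subset (Finset.subset_univ _) hvan, Finset.sum_pair hST]
      rw [minor_on_S S hS S' hS' a b hb p t hp hg, minor_on_S' S hS S' hS' a b ha hb p t hp hg]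
    rw [hsum, htdef]
    field_simp
    ring
end adj

/-- Key structural lemma about the sorted enumeration of `insert b (S.erase a)`
when `b + 1 = a` and `b ∉ S`. -/
lemma key (S : Finset (Fin n)) (hS : S.card = k) (a b : Fin n) (ha : a ∈ S) (hb : b ∉ S)
    (hab : (b : ℕ) + 1 = (a : ℕ)) :
    ∃ (hS' : (insert b (S.erase a)).card = k) (p : Fin k),
      S.orderEmbOfFin hS p = a ∧
      ∀ i, (insert b (S.erase a)).orderEmbOfFin hS' i
          = if i = p then b else S.orderEmbOfFin hS i := by
  have hba : b < a := by rw [Fin.lt_def]; omega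
  have hbe : b ∉ S.erase a := fun h => hb (Finset.mem_of_mem_erase h)
  have hk1 : 1 ≤ k := by rw [← hS]; exact Finset.card_pos.2 ⟨a, ha⟩
  have hS' : (insert b (S.erase a)).card = k := by
    rw [Finset.card_insert_of_notMem hbe, Finset.card_erase_of_mem ha, hS]
    omega
  set p : Fin k := (S.orderIsoOfFin hS).symm ⟨a, ha⟩ with hpdef
  have hp : S.orderEmbOfFin hS p = a := by
    rw [← Finset.coe_orderIsoOfFin_apply, hpdef]
    simp
  set g : Fin k → Fin n := fun i => if i = p then b else S.orderEmbOfFin hS i with hgdef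
  have hmono : StrictMono (S.orderEmbOfFin hS) := (S.orderEmbOfFin hS).strictMono
  have hgmem : ∀ i, g i ∈ insert b (S.erase a) := by
    intro i
    by_cases hip : i = p
    · simp [hgdef, hip]
    · have h1 : S.orderEmbOfFin hS i ∈ S := Finset.orderEmbOfFin_mem S hS i
      have h2 : S.orderEmbOfFin hS i ≠ a := by
        rw [← hp]; exact fun h => hip ((S.orderEmbOfFin hS).injective h)
      simp only [hgdef, if_neg hip]
      exact Finset.mem_insert_of_mem (Finset.mem_erase.2 ⟨h2, h1⟩)
  have hgmono : StrictMono g := by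
    intro i j hij
    rcases eq_or_ne i p with rfl | hip <;> rcases eq_or_ne j p with rfl | hjp
    · exact absurd hij (lt_irrefl _)
    · simp only [hgdef, if_pos rfl, if_neg hjp]
      exact lt_trans hba (hp ▸ hmono hij)
    · simp only [hgdef, if_neg hip, if_pos rfl]
      have h1 : S.orderEmbOfFin hS i < a := hp ▸ hmono hij
      have h2 : S.orderEmbOfFin hS i ≠ b := by
        intro h; exact hb (h ▸ Finset.orderEmbOfFin_mem S hS i)
      rw [Fin.lt_def] at h1 ⊢
      have h3 : (S.orderEmbOfFin hS i : ℕ) ≠ (b : ℕ) := fun h => h2 (Fin.val_injective h)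
      omega
    · simp only [hgdef, if_neg hip, if_neg hjp]
      exact hmono hij
  have := Finset.orderEmbOfFin_unique hS' hgmem hgmono
  exact ⟨hS', p, hp, fun i => (congrFun this i).symm⟩

/-- If a `k`-set is not the base set `{0,…,k-1}`, some element can be moved down by one. -/
lemma exists_step (hkn : k ≤ n) (S : Finset (Fin n)) (hS : S.card = k)
    (hSB : S ≠ Finset.image (Fin.castLE hkn) Finset.univ) :
    ∃ a b : Fin n, a ∈ S ∧ b ∉ S ∧ (b : ℕ) + 1 = (a : ℕ) := by
  by_contra hcon
  push_neg at hcon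
  -- downward closure
  have dc : ∀ (d : ℕ) (x : Fin n), x ∈ S → ∀ y : Fin n, (y : ℕ) + d = (x : ℕ) → y ∈ S := by
    intro d
    induction d with
    | zero =>
      intro x hx y hy
      have : y = x := Fin.ext (by omega)
      rwa [this]
    | succ d ih =>
      intro x hx y hy
      have hz : ((y : ℕ) + 1) < n := by have := x.isLt; omega
      set z : Fin n := ⟨(y : ℕ) + 1, hz⟩ with hzdef
      have hzS : z ∈ S := ih x hx z (by simp [hzdef]; omega)
      by_contra hyS
      exact absurd (by simp [hzdef]) (hcon z y hzS hyS)
  have hsub : S ⊆ Finset.image (Fin.castLE hkn) Finset.univ := by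
    intro x hx
    by_contra hxB
    have hxk : k ≤ (x : ℕ) := by
      by_contra hlt
      push_neg at hlt
      exact hxB (Finset.mem_image.2 ⟨⟨(x : ℕ), hlt⟩, Finset.mem_univ _, Fin.ext rfl⟩)
    have hIic : Finset.Iic x ⊆ S := by
      intro y hy
      have hyx : (y : ℕ) ≤ (x : ℕ) := Fin.le_def.1 (Finset.mem_Iic.1 hy)
      exact dc ((x : ℕ) - (y : ℕ)) x hx y (by omega)
    have hcard := Finset.card_le_card hIic
    rw [Fin.card_Iic, hS] at hcard
    omega
  have hcardB : (Finset.image (Fin.castLE hkn) Finset.univ).card = k := by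
    rw [Finset.card_image_of_injective _ (Fin.castLE_injective hkn), Finset.card_univ,
      Fintype.card_fin]
  exact hSB (Finset.eq_of_subset_of_card_le hsub (by rw [hS, hcardB]))

/-- Main induction: moving any set towards the base set. -/
lemma main_ind (hkn : k ≤ n) (N : Matrix (Fin n) (Fin k) ℝ)
    (hB : (Finset.image (Fin.castLE hkn) Finset.univ).card = k) :
    ∀ (m : ℕ) (S : Finset (Fin n)) (hS : S.card = k), (∑ s ∈ S, (s : ℕ)) = m →
      (∃ A, Good N A) ∨
        0 < minorRows N S hS * minorRows N (Finset.image (Fin.castLE hkn) Finset.univ) hB := by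
  intro m
  induction m using Nat.strong_induction_on with
  | _ m ih =>
    intro S hS hsum
    by_cases hSB : S = Finset.image (Fin.castLE hkn) Finset.univ
    · rcases eq_or_ne (minorRows N S hS) 0 with h0 | h0
      · exact Or.inl (good_of_zero N S hS h0)
      · right
        have heq : minorRows N (Finset.image (Fin.castLE hkn) Finset.univ) hB
            = minorRows N S hS := by subst hSB; rfl
        rw [heq]
        exact mul_self_pos.2 h0
    · obtain ⟨a, b, ha, hb, hab⟩ := exists_step hkn S hS hSB
      obtain ⟨hS', p, hp, hg⟩ := key S hS a b ha hb hab
      set S' := insert b (S.erase a) with hS'def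
      have hbe : b ∉ S.erase a := fun h => hb (Finset.mem_of_mem_erase h)
      have hsum' : (∑ s ∈ S', (s : ℕ)) + 1 = m := by
        rw [hS'def, Finset.sum_insert hbe]
        have h1 : (∑ s ∈ S.erase a, (s : ℕ)) + (a : ℕ) = ∑ s ∈ S, (s : ℕ) :=
          Finset.sum_erase_add S _ ha
        omega
      have hlt : (∑ s ∈ S', (s : ℕ)) < m := by omega
      rcases ih _ hlt S' hS' rfl with hA | hB'
      · exact Or.inl hA
      · rcases lt_trichotomy (minorRows N S hS * minorRows N S' hS') 0 with hneg | hzero | hpos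
        · exact Or.inl (good_of_segment N S hS S' hS' a b ha hb p hp hg hS'def hneg)
        · rcases mul_eq_zero.1 hzero with h0 | h0
          · exact Or.inl (good_of_zero N S hS h0)
          · rw [h0] at hB'; nlinarith
        · right
          nlinarith [mul_pos hpos hB', sq_nonneg (minorRows N S' hS')]

end Stmt19

/-- If the `k × k` minors of an `n × k` matrix `N` do not all have the same
strict sign (some minor vanishes, or two minors have opposite signs), then there is a totally
nonnegative `k × n` matrix `A` of rank `k` with `∑_I Δ_I(N) · Δ_I(A) = 0`, the sum running
over all `k`-element subsets `I` of `{1,…,n}`. -/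
theorem stmt19 (k n : ℕ) (hk : 1 ≤ k) (hkn : k ≤ n)
    (N : Matrix (Fin n) (Fin k) ℝ)
    (hN : (∃ (S : Finset (Fin n)) (hS : S.card = k), minorRows N S hS = 0) ∨
          (∃ (S : Finset (Fin n)) (hS : S.card = k) (T : Finset (Fin n)) (hT : T.card = k),
            0 < minorRows N S hS ∧ minorRows N T hT < 0)) :
    ∃ A : Matrix (Fin k) (Fin n) ℝ, IsTotallyNonneg A ∧ A.rank = k ∧
      ∑ S : {S : Finset (Fin n) // S.card = k},
        minorRows N S.1 S.2 * minorCols A S.1 S.2 = 0 := by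
  rcases hN with ⟨S, hS, hzero⟩ | ⟨S, hS, T, hT, hSpos, hTneg⟩
  · exact Stmt19.good_of_zero N S hS hzero
  · have hB : (Finset.image (Fin.castLE hkn) Finset.univ).card = k := by
      rw [Finset.card_image_of_injective _ (Fin.castLE_injective hkn), Finset.card_univ,
        Fintype.card_fin]
    rcases Stmt19.main_ind hkn N hB _ S hS rfl with hA | h1
    · exact hA
    rcases Stmt19.main_ind hkn N hB _ T hT rfl with hA | h2
    · exact hA
    exfalso
    nlinarith
end
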